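/- arXiv:math/0503671 — 6 statements merged into one kernel-verified Lean document; each statement's English description precedes it below -/
import Mathlib

section
/- Let d ≥ 1 and let R₀ be a Borel subset of (-1/2, 1/2]^d that contains an open neighborhood of the origin and satisfies the boundary condition. Let t ∈ [-1/2, 1/2]^d and let Z^d_t = t + Z^d denote the translated integer lattice. Let (Δₙ) be a sequence of d × d diagonal matrices with positive diagonal entries λ₁⁽ⁿ⁾, …, λ_d⁽ⁿ⁾ such that each λᵢ⁽ⁿ⁾ → ∞ as n → ∞ and max₁≤i≤d λᵢ⁽ⁿ⁾ = O(min₁≤i≤d λᵢ⁽ⁿ⁾). Then the number of lattice points Nₙ = #(Z^d_t ∩ ΔₙR₀) satisfies Nₙ / det(Δₙ) → |R₀| as n → ∞. -/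
/-!
After rescaling by `a = λ⁻¹`, the lattice point `a (t + j)` lies in the box of side lengths `a`
centred at `a j`. The boxes contained in `R₀` give a lower bound for the count and for `|R₀|`,
the boxes meeting `R₀` an upper bound for both, so count and volume differ by at most the number
of boxes crossing the frontier of `R₀`, times `∏ aᵢ`. Each such box contains a frontier point,
hence meets a boundary cube of the `ε`-grid for any `ε ≤ min aᵢ`, and each such cube meets at
most `3ᵈ` boxes. The boundary condition then bounds the error by `3ᵈ C ε¹⁻ᵈ ∏ aᵢ = O(ε)` once
`ε` is chosen comparable with all the `aᵢ`, which the condition `max λᵢ = O(min λᵢ)` allows.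
-/

open MeasureTheory Filter Topology Set Bornology Function

lemma IsPreconnected.inter_frontier_nonempty {X : Type*} [TopologicalSpace X] {s A : Set X}
    (hs : IsPreconnected s) (hA : (s ∩ A).Nonempty) (hAc : (s \ A).Nonempty) :
    (s ∩ frontier A).Nonempty := by
  rw [frontier_eq_closure_inter_closure]
  exact isPreconnected_closed_iff.mp hs _ _ isClosed_closure isClosed_closure
    (fun x _ => (em (x ∈ A)).imp (fun h => subset_closure h) (fun h => subset_closure h))
    (hA.mono (inter_subset_inter_right _ subset_closure))
    (hAc.mono (inter_subset_inter_right _ subset_closure))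

section Definitions

variable {ι : Type*}

def latticeBox (a : ι → ℝ) (j : ι → ℤ) : Set (ι → ℝ) :=
  univ.pi fun i => Icc (a i * (j i - 1 / 2)) (a i * (j i + 1 / 2))

def latticeBoxIoc (a : ι → ℝ) (j : ι → ℤ) : Set (ι → ℝ) :=
  univ.pi fun i => Ioc (a i * (j i - 1 / 2)) (a i * (j i + 1 / 2))

def gridCube (ε : ℝ) (k : ι → ℤ) : Set (ι → ℝ) :=
  univ.pi fun i => Icc (ε * k i) (ε * (k i + 1))

def boundaryBoxes (a : ι → ℝ) (R : Set (ι → ℝ)) : Set (ι → ℤ) :=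
  {j | (latticeBox a j ∩ R).Nonempty ∧ (latticeBox a j \ R).Nonempty}

def boundaryCubes (ε : ℝ) (R : Set (ι → ℝ)) : Set (ι → ℤ) :=
  {k | (gridCube ε k ∩ closure R).Nonempty ∧ (gridCube ε k ∩ closure Rᶜ).Nonempty}

end Definitions

section Boxes

variable {ι : Type*} {a : ι → ℝ}

lemma latticeBoxIoc_subset_latticeBox (a : ι → ℝ) (j : ι → ℤ) :
    latticeBoxIoc a j ⊆ latticeBox a j :=
  pi_mono fun _ _ => Ioc_subset_Icc_self

lemma isPreconnected_latticeBox (a : ι → ℝ) (j : ι → ℤ) : IsPreconnected (latticeBox a j) :=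
  (convex_pi fun _ _ => convex_Icc _ _).isPreconnected

lemma mul_add_mem_latticeBox (ha : ∀ i, 0 ≤ a i) {t : ι → ℝ}
    (ht : ∀ i, t i ∈ Icc (-(1 / 2) : ℝ) (1 / 2)) (j : ι → ℤ) :
    (fun i => a i * (t i + j i)) ∈ latticeBox a j := fun i _ =>
  ⟨by nlinarith [ha i, (ht i).1], by nlinarith [ha i, (ht i).2]⟩

lemma mem_latticeBoxIoc_ceil (ha : ∀ i, 0 < a i) (x : ι → ℝ) :
    x ∈ latticeBoxIoc a (fun i => ⌈x i / a i - 1 / 2⌉) := by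
  intro i _
  have hx : x i / a i * a i = x i := div_mul_cancel₀ _ (ha i).ne'
  have h₁ := Int.le_ceil (x i / a i - 1 / 2)
  have h₂ := Int.ceil_lt_add_one (x i / a i - 1 / 2)
  exact ⟨by nlinarith [ha i], by nlinarith [ha i]⟩

lemma pairwise_disjoint_latticeBoxIoc (a : ι → ℝ) : Pairwise (Disjoint on latticeBoxIoc a) := by
  refine fun j j' hne => disjoint_left.mpr fun x hx hx' => hne (funext fun i => ?_)
  obtain ⟨h₁, h₂⟩ := hx i (mem_univ i)
  obtain ⟨h₁', h₂'⟩ := hx' i (mem_univ i)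
  have hlt : (j i : ℝ) < j' i + 1 := by nlinarith
  have hlt' : (j' i : ℝ) < j i + 1 := by nlinarith
  have : j i < j' i + 1 := by exact_mod_cast hlt
  have : j' i < j i + 1 := by exact_mod_cast hlt'
  omega

lemma mem_gridCube_floor {ε : ℝ} (hε : 0 < ε) (x : ι → ℝ) :
    x ∈ gridCube ε (fun i => ⌊x i / ε⌋) := by
  intro i _
  have hx : x i / ε * ε = x i := div_mul_cancel₀ _ hε.ne'
  have h₁ := Int.floor_le (x i / ε)
  have h₂ := Int.lt_floor_add_one (x i / ε)
  exact ⟨by nlinarith, by nlinarith⟩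

lemma Bornology.IsBounded.finite_setOf_near_lattice [Fintype ι] (ha : ∀ i, 0 < a i)
    {K : Set (ι → ℝ)} (hK : IsBounded K) :
    {j : ι → ℤ | ∃ x ∈ K, ∀ i, |x i - a i * j i| ≤ a i}.Finite := by
  obtain ⟨r, hr⟩ := (Metric.isBounded_iff_subset_closedBall (0 : ι → ℝ)).1 hK
  refine (Finite.pi fun i =>
    finite_Icc (-⌈(r + a i) / a i⌉) ⌈(r + a i) / a i⌉).subset ?_
  rintro j ⟨x, hxK, hx⟩ i -
  have hxi : |x i| ≤ r := by
    simpa using (norm_le_pi_norm x i).trans (mem_closedBall_zero_iff.1 (hr hxK))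
  have hj : |(j i : ℝ)| ≤ (r + a i) / a i := by
    rw [le_div_iff₀ (ha i)]
    calc |(j i : ℝ)| * a i = |a i * j i| := by rw [abs_mul, abs_of_pos (ha i), mul_comm]
      _ ≤ |x i| + |x i - a i * j i| := by
          simpa using abs_sub (x i) (x i - a i * j i)
      _ ≤ r + a i := add_le_add hxi (hx i)
  have : |j i| ≤ ⌈(r + a i) / a i⌉ := by
    exact_mod_cast hj.trans (Int.le_ceil _)
  exact abs_le.1 this

lemma mem_image_pi_mul_iff {lam : ι → ℝ} (h : ∀ i, lam i ≠ 0) {R : Set (ι → ℝ)} {y : ι → ℝ} :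
    y ∈ (fun x i => lam i * x i) '' R ↔ (fun i => (lam i)⁻¹ * y i) ∈ R := by
  constructor
  · rintro ⟨x, hx, rfl⟩
    convert hx using 1
    funext i
    field_simp [h i]
  · intro hy
    refine ⟨_, hy, funext fun i => ?_⟩
    field_simp [h i]

end Boxes

section Counting

variable {ι : Type*} [Fintype ι] {a : ι → ℝ}

lemma encard_setOf_latticeBox_inter_gridCube_le (ha : ∀ i, 0 < a i) {ε : ℝ} (hεa : ∀ i, ε ≤ a i)
    (k : ι → ℤ) :
    {j | (latticeBox a j ∩ gridCube ε k).Nonempty}.encard ≤ 3 ^ Fintype.card ι := by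
  classical
  set m : ι → ℤ := fun i => ⌈ε * k i / a i - 1 / 2⌉
  have hsub : {j | (latticeBox a j ∩ gridCube ε k).Nonempty} ⊆
      Fintype.piFinset fun i => Finset.Icc (m i) (m i + 2) := by
    rintro j ⟨x, hxB, hxQ⟩
    refine Fintype.mem_piFinset.2 fun i => Finset.mem_Icc.2 ?_
    obtain ⟨h₁, h₂⟩ := hxB i (mem_univ i)
    obtain ⟨h₃, h₄⟩ := hxQ i (mem_univ i)
    have hc : ε * k i / a i * a i = ε * k i := div_mul_cancel₀ _ (ha i).ne'
    have hlow : ε * k i / a i - 1 / 2 ≤ j i := by nlinarith [ha i, hεa i]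
    have hup : (j i : ℝ) ≤ ε * k i / a i - 1 / 2 + 2 := by nlinarith [ha i, hεa i]
    have hm := Int.le_ceil (ε * k i / a i - 1 / 2)
    have hup' : (j i : ℝ) ≤ m i + 2 := by linarith
    exact ⟨Int.ceil_le.2 hlow, by exact_mod_cast hup'⟩
  calc _ ≤ ((Fintype.piFinset fun i => Finset.Icc (m i) (m i + 2) : Finset _) : Set _).encard :=
        encard_le_encard hsub
    _ = 3 ^ Fintype.card ι := by
        rw [encard_coe_eq_coe_finsetCard, Fintype.card_piFinset]
        simp [Int.card_Icc, add_assoc]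

lemma ncard_boundaryBoxes_le (ha : ∀ i, 0 < a i) {ε : ℝ} (hε : 0 < ε) (hεa : ∀ i, ε ≤ a i)
    {R : Set (ι → ℝ)} (hQ : (boundaryCubes ε R).Finite) :
    (boundaryBoxes a R).ncard ≤ 3 ^ Fintype.card ι * (boundaryCubes ε R).ncard := by
  have hcover : boundaryBoxes a R ⊆
      ⋃ k ∈ hQ.toFinset, {j | (latticeBox a j ∩ gridCube ε k).Nonempty} := by
    rintro j ⟨hin, hout⟩
    obtain ⟨x, hxB, hxF⟩ :=
      (isPreconnected_latticeBox a j).inter_frontier_nonempty hin hout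
    rw [frontier_eq_closure_inter_closure] at hxF
    have hxQ := mem_gridCube_floor hε x
    exact mem_biUnion (hQ.mem_toFinset.2 ⟨⟨x, hxQ, hxF.1⟩, ⟨x, hxQ, hxF.2⟩⟩) ⟨x, hxB, hxQ⟩
  have : (boundaryBoxes a R).encard ≤ (3 ^ Fintype.card ι * (boundaryCubes ε R).ncard : ℕ) :=
    calc _ ≤ _ := encard_le_encard hcover
      _ ≤ ∑ k ∈ hQ.toFinset, {j | (latticeBox a j ∩ gridCube ε k).Nonempty}.encard :=
          Finset.set_encard_biUnion_le _ _
      _ ≤ ∑ k ∈ hQ.toFinset, (3 ^ Fintype.card ι : ℕ∞) :=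
          Finset.sum_le_sum fun k _ => encard_setOf_latticeBox_inter_gridCube_le ha hεa k
      _ = _ := by simp [ncard_eq_toFinset_card _ hQ, mul_comm]
  exact (encard_le_coe_iff_finite_ncard_le.1 this).2

lemma volume_latticeBoxIoc (ha : ∀ i, 0 ≤ a i) (j : ι → ℤ) :
    volume (latticeBoxIoc a j) = ENNReal.ofReal (∏ i, a i) := by
  rw [latticeBoxIoc, volume_pi_pi, ENNReal.ofReal_prod_of_nonneg fun i _ => ha i]
  congr 1 with i
  rw [Real.volume_Ioc]
  ring_nf

lemma volume_le_ncard_mul (ha : ∀ i, 0 < a i) {R : Set (ι → ℝ)}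
    (hH : {j | (latticeBox a j ∩ R).Nonempty}.Finite) :
    volume R ≤ {j | (latticeBox a j ∩ R).Nonempty}.ncard * ENNReal.ofReal (∏ i, a i) := by
  have hcover : R ⊆ ⋃ j ∈ hH.toFinset, latticeBoxIoc a j := fun x hx =>
    mem_biUnion (hH.mem_toFinset.2 ⟨x, latticeBoxIoc_subset_latticeBox _ _
      (mem_latticeBoxIoc_ceil ha x), hx⟩) (mem_latticeBoxIoc_ceil ha x)
  calc volume R ≤ volume (⋃ j ∈ hH.toFinset, latticeBoxIoc a j) := measure_mono hcover
    _ ≤ ∑ j ∈ hH.toFinset, volume (latticeBoxIoc a j) := measure_biUnion_finset_le _ _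
    _ = _ := by
        simp [volume_latticeBoxIoc (fun i => (ha i).le), ncard_eq_toFinset_card _ hH]

lemma ncard_mul_le_volume (ha : ∀ i, 0 ≤ a i) {R : Set (ι → ℝ)}
    (hG : {j | latticeBox a j ⊆ R}.Finite) :
    {j | latticeBox a j ⊆ R}.ncard * ENNReal.ofReal (∏ i, a i) ≤ volume R := by
  have hsub : ⋃ j ∈ hG.toFinset, latticeBoxIoc a j ⊆ R := iUnion₂_subset fun j hj =>
    (latticeBoxIoc_subset_latticeBox a j).trans (hG.mem_toFinset.1 hj)
  calc _ = ∑ j ∈ hG.toFinset, volume (latticeBoxIoc a j) := by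
        simp [volume_latticeBoxIoc ha, ncard_eq_toFinset_card _ hG]
    _ = volume (⋃ j ∈ hG.toFinset, latticeBoxIoc a j) :=
        (measure_biUnion_finset ((pairwise_disjoint_latticeBoxIoc a).set_pairwise _)
          fun j _ => MeasurableSet.univ_pi fun _ => measurableSet_Ioc).symm
    _ ≤ volume R := measure_mono hsub

end Counting

section Estimate

variable {ι : Type*} [Fintype ι]

lemma abs_ncard_mul_prod_sub_volume_le {a : ι → ℝ} (ha : ∀ i, 0 < a i) {t : ι → ℝ}
    (ht : ∀ i, t i ∈ Icc (-(1 / 2) : ℝ) (1 / 2)) {R : Set (ι → ℝ)} (hR : IsBounded R) :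
    |({j : ι → ℤ | (fun i => a i * (t i + j i)) ∈ R}.ncard : ℝ) * ∏ i, a i - (volume R).toReal|
      ≤ (boundaryBoxes a R).ncard * ∏ i, a i := by
  set S := {j : ι → ℤ | (fun i => a i * (t i + j i)) ∈ R}
  set G := {j | latticeBox a j ⊆ R}
  set H := {j | (latticeBox a j ∩ R).Nonempty}
  have hmem := mul_add_mem_latticeBox (fun i => (ha i).le) ht
  have hGS : G ⊆ S := fun j hj => hj (hmem j)
  have hSH : S ⊆ H := fun j hj => ⟨_, hmem j, hj⟩
  have hHGB : H ⊆ G ∪ boundaryBoxes a R := fun j hj =>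
    (em (latticeBox a j ⊆ R)).imp id fun h => ⟨hj, sdiff_nonempty.2 h⟩
  have hH : H.Finite := (hR.finite_setOf_near_lattice ha).subset fun j ⟨x, hxB, hxR⟩ =>
    ⟨x, hxR, fun i => abs_sub_le_iff.2
      ⟨by linarith [(hxB i trivial).2, ha i], by linarith [(hxB i trivial).1, ha i]⟩⟩
  have hG : G.Finite := hH.subset (hGS.trans hSH)
  have hP : 0 ≤ ∏ i, a i := Finset.prod_nonneg fun i _ => (ha i).le
  have hvol_le : (volume R).toReal ≤ H.ncard * ∏ i, a i := by
    simpa [ENNReal.toReal_ofReal hP] using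
      ENNReal.toReal_mono (by finiteness) (volume_le_ncard_mul ha hH)
  have hle_vol : G.ncard * ∏ i, a i ≤ (volume R).toReal := by
    simpa [ENNReal.toReal_ofReal hP] using
      ENNReal.toReal_mono hR.measure_lt_top.ne (ncard_mul_le_volume (fun i => (ha i).le) hG)
  have hGS' : (G.ncard : ℝ) ≤ S.ncard := by exact_mod_cast ncard_le_ncard hGS (hH.subset hSH)
  have hSH' : (S.ncard : ℝ) ≤ H.ncard := by exact_mod_cast ncard_le_ncard hSH hH
  have hHGB' : (H.ncard : ℝ) ≤ G.ncard + (boundaryBoxes a R).ncard := by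
    exact_mod_cast (ncard_le_ncard hHGB ((hG.union (hH.subset fun _ hj => hj.1)))).trans
      (ncard_union_le _ _)
  rw [abs_sub_le_iff]
  constructor <;> nlinarith

lemma abs_ncard_div_prod_sub_volume_le {R : Set (ι → ℝ)} (hR : IsBounded R) {t : ι → ℝ}
    (ht : ∀ i, t i ∈ Icc (-(1 / 2) : ℝ) (1 / 2)) {C K M : ℝ} (hM : 0 < M)
    (hQ : ((boundaryCubes M⁻¹ R).ncard : ℝ) ≤ C * M⁻¹ ^ ((1 : ℤ) - Fintype.card ι))
    {lam : ι → ℝ} (hpos : ∀ i, 0 < lam i) (hlamM : ∀ i, lam i ≤ M) (hMlam : ∀ i, M ≤ K * lam i) :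
    |({j : ι → ℤ | (fun i => t i + j i) ∈ (fun x i => lam i * x i) '' R}.ncard : ℝ) /
        ∏ i, lam i - (volume R).toReal| ≤ 3 ^ Fintype.card ι * C * K ^ Fintype.card ι * M⁻¹ := by
  set d := Fintype.card ι
  set ε := M⁻¹
  set a : ι → ℝ := fun i => (lam i)⁻¹
  have hε : 0 < ε := inv_pos.2 hM
  have ha : ∀ i, 0 < a i := fun i => inv_pos.2 (hpos i)
  have hεa : ∀ i, ε ≤ a i := fun i => inv_anti₀ (hpos i) (hlamM i)
  have haK : ∀ i, a i ≤ K * ε := fun i => by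
    rw [← div_eq_mul_inv, le_div_iff₀ hM, inv_mul_le_iff₀ (hpos i)]
    linarith [hMlam i]
  have hQfin : (boundaryCubes ε R).Finite :=
    (hR.closure.finite_setOf_near_lattice (a := fun _ => ε) fun _ => hε).subset
      fun k ⟨⟨x, hxQ, hxR⟩, _⟩ => ⟨x, hxR, fun i => abs_sub_le_iff.2
        ⟨by linarith [(hxQ i trivial).2], by linarith [(hxQ i trivial).1]⟩⟩
  have hC : 0 ≤ C * ε ^ ((1 : ℤ) - d) := (Nat.cast_nonneg _).trans hQ
  have hpow : ε ^ ((1 : ℤ) - d) * ε ^ d = ε := by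
    rw [← zpow_natCast, ← zpow_add₀ hε.ne', sub_add_cancel, zpow_one]
  have hcount : {j : ι → ℤ | (fun i => t i + j i) ∈ (fun x i => lam i * x i) '' R} =
      {j | (fun i => a i * (t i + j i)) ∈ R} :=
    ext fun j => mem_image_pi_mul_iff fun i => (hpos i).ne'
  rw [hcount, div_eq_mul_inv, ← Finset.prod_inv_distrib]
  calc _ ≤ (boundaryBoxes a R).ncard * ∏ i, a i := abs_ncard_mul_prod_sub_volume_le ha ht hR
    _ ≤ (3 ^ d * (boundaryCubes ε R).ncard : ℕ) * ∏ i, a i := by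
        gcongr
        · exact Finset.prod_nonneg fun i _ => (ha i).le
        · exact ncard_boundaryBoxes_le ha hε hεa hQfin
    _ ≤ 3 ^ d * (C * ε ^ ((1 : ℤ) - d)) * ∏ _i : ι, K * ε := by
        push_cast
        gcongr with i
        · exact Finset.prod_nonneg fun i _ => (ha i).le
        · exact fun i _ => (ha i).le
        · exact haK i
    _ = 3 ^ d * C * K ^ d * ε := by
        rw [Finset.prod_const, Finset.card_univ]
        linear_combination (3 ^ d * C * K ^ d) * hpow

end Estimate

theorem stmt_0_general (d : ℕ) (hd : 1 ≤ d)
    (R₀ : Set (Fin d → ℝ))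
    (hsub : R₀ ⊆ Set.univ.pi fun _ => Set.Ioc (-(1/2) : ℝ) (1/2))
    (hbdry : ∃ C : ℝ, 0 < C ∧ ∀ a : ℝ, 0 < a → a ≤ 1 →
      (Set.ncard {j : Fin d → ℤ |
        (Set.univ.pi (fun i => Set.Icc (a * (j i : ℝ)) (a * ((j i : ℝ) + 1))) ∩
          closure R₀).Nonempty ∧
        (Set.univ.pi (fun i => Set.Icc (a * (j i : ℝ)) (a * ((j i : ℝ) + 1))) ∩
          closure R₀ᶜ).Nonempty} : ℝ) ≤ C * a ^ ((1 : ℤ) - d))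
    (t : Fin d → ℝ) (ht : ∀ i, t i ∈ Set.Icc (-(1/2) : ℝ) (1/2))
    (lam : ℕ → Fin d → ℝ) (hpos : ∀ n i, 0 < lam n i)
    (htend : ∀ i, Tendsto (fun n => lam n i) atTop atTop)
    (hmaxmin : ∃ C : ℝ, ∀ n i j, lam n i ≤ C * lam n j) :
    Tendsto (fun n =>
      (Set.ncard {j : Fin d → ℤ |
        (fun i => t i + (j i : ℝ)) ∈ (fun x i => lam n i * x i) '' R₀} : ℝ) / ∏ i, lam n i)
      atTop (𝓝 (volume R₀).toReal) := by
  obtain ⟨C, -, hbdry⟩ := hbdry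
  obtain ⟨K, hK⟩ := hmaxmin
  let i₀ : Fin d := ⟨0, hd⟩
  have hK1 : 1 ≤ K := le_of_mul_le_mul_right (by simpa using hK 0 i₀ i₀) (hpos 0 i₀)
  have hR : IsBounded R₀ := (IsBounded.pi fun _ => Metric.isBounded_Ioc _ _).subset hsub
  set M : ℕ → ℝ := fun n => K * lam n i₀
  have hM : Tendsto M atTop atTop := (htend i₀).const_mul_atTop (by linarith)
  rw [← tendsto_sub_nhds_zero_iff]
  refine squeeze_zero_norm' ?_
    (by simpa using hM.inv_tendsto_atTop.const_mul (3 ^ d * C * (K * K) ^ d))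
  filter_upwards [hM.eventually_ge_atTop 1] with n hMn
  have hM0 : 0 < M n := by linarith
  have key := abs_ncard_div_prod_sub_volume_le (K := K * K) hR ht hM0
    (by rw [Fintype.card_fin]; exact hbdry _ (inv_pos.2 hM0) (inv_le_one_of_one_le₀ hMn))
    (hpos n) (fun i => hK n i i₀)
    (fun i => by rw [mul_assoc]; exact mul_le_mul_of_nonneg_left (hK n i₀ i) (by linarith))
  rwa [Fintype.card_fin] at key

/-- lattice point count in an inflated region is asymptotic to its volume. -/
theorem stmt_0 (d : ℕ) (hd : 1 ≤ d)
    (R₀ : Set (Fin d → ℝ)) (hmeas : MeasurableSet R₀)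
    (hsub : R₀ ⊆ Set.univ.pi fun _ => Set.Ioc (-(1/2) : ℝ) (1/2))
    (hnbhd : R₀ ∈ 𝓝 (0 : Fin d → ℝ))
    (hbdry : ∃ C : ℝ, 0 < C ∧ ∀ a : ℝ, 0 < a → a ≤ 1 →
      (Set.ncard {j : Fin d → ℤ |
        (Set.univ.pi (fun i => Set.Icc (a * (j i : ℝ)) (a * ((j i : ℝ) + 1))) ∩
          closure R₀).Nonempty ∧
        (Set.univ.pi (fun i => Set.Icc (a * (j i : ℝ)) (a * ((j i : ℝ) + 1))) ∩
          closure R₀ᶜ).Nonempty} : ℝ) ≤ C * a ^ ((1 : ℤ) - d))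
    (t : Fin d → ℝ) (ht : ∀ i, t i ∈ Set.Icc (-(1/2) : ℝ) (1/2))
    (lam : ℕ → Fin d → ℝ) (hpos : ∀ n i, 0 < lam n i)
    (htend : ∀ i, Tendsto (fun n => lam n i) atTop atTop)
    (hmaxmin : ∃ C : ℝ, ∀ n i j, lam n i ≤ C * lam n j) :
    Tendsto (fun n =>
      (Set.ncard {j : Fin d → ℤ |
        (fun i => t i + (j i : ℝ)) ∈ (fun x i => lam n i * x i) '' R₀} : ℝ) / ∏ i, lam n i)
      atTop (𝓝 (volume R₀).toReal) :=
  stmt_0_general d hd R₀ hsub hbdry t ht lam hpos htend hmaxmin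
end

section
/- Let d ≥ 1 and let R₀ be a Borel subset of (-1/2, 1/2]^d that contains an open neighborhood of the origin and satisfies the boundary condition. Let t ∈ [-1/2, 1/2]^d and Z^d_t = t + Z^d. Let (Δₙ) be a sequence of d × d diagonal matrices with positive diagonal entries λ₁⁽ⁿ⁾, …, λ_d⁽ⁿ⁾, each tending to ∞, with max₁≤i≤d λᵢ⁽ⁿ⁾ = O(min₁≤i≤d λᵢ⁽ⁿ⁾), and set λₙ^max = max₁≤i≤d λᵢ⁽ⁿ⁾. Then there exists a constant C > 0 such that for all n and all i ∈ Z^d, the number of points j ∈ Z^d_t for which the cube j + [-2, 2]^d intersects both the closure of i + ΔₙR₀ and the closure of the complement of i + ΔₙR₀ is at most C (λₙ^max)^{d-1}. -/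
/-
If the box `t + j + [-2, 2]^d` meets both closures, it meets the frontier of `i + Δₙ R₀`
(boxes are connected), hence contains `i + Δₙ y` for some `y ∈ ∂R₀`. Put `M = max(λₙ^max, 1)`
and let `k` be the cube of side `1/M` containing `y`; it straddles `R₀`, so by the boundary
condition there are `O(M^(d-1))` choices of `k`. The image of that cube under `i + Δₙ` has sides
at most `1`, so given `k` only `6^d` values of `j` remain. Finally `λₙ^max` is bounded below by a
positive constant (it is positive and tends to `∞`), so `M = O(λₙ^max)`.
-/

open Filter Topology Set Metric

section Topology

variable {X : Type*} [TopologicalSpace X]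

def Straddles (K S : Set X) : Prop :=
  (K ∩ closure S).Nonempty ∧ (K ∩ closure Sᶜ).Nonempty

theorem IsPreconnected.inter_frontier_nonempty_of_straddles {K S : Set X}
    (hK : IsPreconnected K) (h : Straddles K S) : (K ∩ frontier S).Nonempty := by
  rw [frontier_eq_closure_inter_closure]
  refine isPreconnected_closed_iff.1 hK _ _ isClosed_closure isClosed_closure
    (fun x _ => ?_) h.1 h.2
  by_cases hx : x ∈ S
  exacts [Or.inl (subset_closure hx), Or.inr (subset_closure hx)]

theorem straddles_of_mem_frontier {K S : Set X} {y : X} (hyK : y ∈ K) (hy : y ∈ frontier S) :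
    Straddles K S :=
  ⟨⟨y, hyK, frontier_subset_closure hy⟩,
    ⟨y, hyK, frontier_subset_closure (frontier_compl S ▸ hy)⟩⟩

theorem Homeomorph.exists_mem_frontier_of_straddles {Y : Type*} [TopologicalSpace Y]
    (H : X ≃ₜ Y) {K : Set Y} {R : Set X} (hK : IsPreconnected K) (h : Straddles K (H '' R)) :
    ∃ y ∈ frontier R, H y ∈ K := by
  obtain ⟨z, hzK, hz⟩ := hK.inter_frontier_nonempty_of_straddles h
  rw [← H.image_frontier] at hz
  obtain ⟨y, hy, rfl⟩ := hz
  exact ⟨y, hy, hzK⟩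

end Topology

theorem Int.sub_floor_mem_Icc_of_abs_sub_le {j : ℤ} {x q ρ : ℝ} (hx : x ∈ Icc q (q + 1))
    (hj : |x - j| ≤ ρ) : j - ⌊q⌋ ∈ Finset.Icc (-(⌈ρ⌉₊ : ℤ)) (⌈ρ⌉₊ + 1) := by
  rw [abs_le] at hj
  have hρ := Nat.le_ceil ρ
  have hq₁ := Int.floor_le q
  have hq₂ := Int.lt_floor_add_one q
  rw [Finset.mem_Icc]
  constructor
  · have : (-(⌈ρ⌉₊ : ℤ) : ℝ) ≤ ((j - ⌊q⌋ : ℤ) : ℝ) := by push_cast; linarith [hx.1]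
    exact_mod_cast this
  · have : ((j - ⌊q⌋ : ℤ) : ℝ) < ((⌈ρ⌉₊ + 1 : ℤ) : ℝ) + 1 := by push_cast; linarith [hx.2]
    exact Int.lt_add_one_iff.1 (by exact_mod_cast this)

theorem mul_mem_Icc_add_one_of_le {lam M y r : ℝ} (hlam : 0 < lam) (hlamM : lam ≤ M)
    (hy : y ∈ Icc (M⁻¹ * r) (M⁻¹ * (r + 1))) :
    lam * y ∈ Icc (lam * (M⁻¹ * r)) (lam * (M⁻¹ * r) + 1) := by
  have hM : 0 < M := hlam.trans_le hlamM
  have hlamM' : lam * M⁻¹ ≤ 1 := by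
    rw [← div_eq_mul_inv, div_le_one hM]
    exact hlamM
  constructor
  · exact mul_le_mul_of_nonneg_left hy.1 hlam.le
  · nlinarith [mul_le_mul_of_nonneg_left hy.2 hlam.le]

section Lattice

variable {ι : Type*}

def latticeCube (a : ℝ) (k : ι → ℤ) : Set (ι → ℝ) :=
  univ.pi fun m => Icc (a * k m) (a * (k m + 1))

theorem mem_latticeCube_floor {a : ℝ} (ha : 0 < a) (y : ι → ℝ) :
    y ∈ latticeCube a (fun m => ⌊y m / a⌋) := by
  intro m _
  constructor
  · rw [← le_div_iff₀' ha]
    exact Int.floor_le _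
  · rw [← div_le_iff₀' ha]
    exact (Int.lt_floor_add_one _).le

variable [Fintype ι]

theorem finite_straddling_latticeCube {R : Set (ι → ℝ)} (hR : Bornology.IsBounded R) {a : ℝ}
    (ha : 0 < a) : {k : ι → ℤ | Straddles (latticeCube a k) R}.Finite := by
  obtain ⟨r, hr⟩ := (isBounded_iff_subset_closedBall 0).1 hR.closure
  refine (Set.Finite.pi fun _ => Set.finite_Icc ⌈-r / a - 1⌉ ⌊r / a⌋).subset ?_
  rintro k ⟨⟨w, hwk, hwR⟩, -⟩ m -
  have hw : |w m| ≤ r := (norm_le_pi_norm w m).trans (mem_closedBall_zero_iff.1 (hr hwR))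
  obtain ⟨hk₁, hk₂⟩ := hwk m (mem_univ m)
  rw [abs_le] at hw
  constructor
  · rw [Int.ceil_le, sub_le_iff_le_add, div_le_iff₀ ha]
    linarith
  · rw [Int.le_floor, le_div_iff₀ ha]
    linarith

theorem exists_mem_frontier_of_straddles_closedBall {R : Set (ι → ℝ)} (c : ι → ℝ)
    {lam : ι → ℝ} (hlam : ∀ m, lam m ≠ 0) {x : ι → ℝ} {ρ : ℝ}
    (h : Straddles (closedBall x ρ) ((fun y m => c m + lam m * y m) '' R)) :
    ∃ y ∈ frontier R, ∀ m, |c m + lam m * y m - x m| ≤ ρ := by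
  let H : (ι → ℝ) ≃ₜ (ι → ℝ) := Homeomorph.piCongrRight fun m =>
    (Homeomorph.mulLeft₀ (lam m) (hlam m)).trans (Homeomorph.addLeft (c m))
  obtain ⟨y, hy, hyx⟩ :=
    H.exists_mem_frontier_of_straddles (convex_closedBall x ρ).isPreconnected h
  exact ⟨y, hy, fun m => (Real.dist_eq _ _ ▸ dist_le_pi_dist (H y) x m).trans hyx⟩

theorem ncard_straddling_closedBall_le {R : Set (ι → ℝ)} (hR : Bornology.IsBounded R)
    (c : ι → ℝ) {lam : ι → ℝ} (hlam : ∀ m, 0 < lam m) (t : ι → ℝ) (ρ : ℝ) {M : ℝ} (hM : 0 < M)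
    (hlamM : ∀ m, lam m ≤ M) :
    {j : ι → ℤ | Straddles (closedBall (fun m => t m + j m) ρ)
        ((fun y m => c m + lam m * y m) '' R)}.ncard ≤
      {k : ι → ℤ | Straddles (latticeCube M⁻¹ k) R}.ncard * (2 * ⌈ρ⌉₊ + 2) ^ Fintype.card ι := by
  classical
  have hM' : 0 < M⁻¹ := inv_pos.2 hM
  set D := {j : ι → ℤ | Straddles (closedBall (fun m => t m + j m) ρ)
    ((fun y m => c m + lam m * y m) '' R)}
  have key : ∀ j ∈ D, ∃ y ∈ frontier R, ∀ m, |c m + lam m * y m - (t m + j m)| ≤ ρ :=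
    fun j hj => exists_mem_frontier_of_straddles_closedBall c (fun m => (hlam m).ne') hj
  choose! y hy hyj using key
  let cube (j : ι → ℤ) : ι → ℤ := fun m => ⌊y j m / M⁻¹⌋
  let shift (k : ι → ℤ) : ι → ℤ := fun m => ⌊c m + lam m * (M⁻¹ * k m) - t m⌋
  let window : Finset (ι → ℤ) :=
    Fintype.piFinset fun _ => Finset.Icc (-(⌈ρ⌉₊ : ℤ)) (⌈ρ⌉₊ + 1)
  have hwindow : window.card = (2 * ⌈ρ⌉₊ + 2) ^ Fintype.card ι := by
    simp only [window, Fintype.card_piFinset, Int.card_Icc, Finset.prod_const, Finset.card_univ]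
    congr 1
    omega
  calc D.ncard ≤ ({k | Straddles (latticeCube M⁻¹ k) R} ×ˢ (window : Set (ι → ℤ))).ncard := by
        -- `j` is recovered from the cube of its boundary point and its offset from that cube
        refine Set.ncard_le_ncard_of_injOn (fun j => (cube j, j - shift (cube j))) ?_ ?_
          ((finite_straddling_latticeCube hR hM').prod window.finite_toSet)
        · intro j hj
          have hcube := mem_latticeCube_floor hM' (y j)
          refine ⟨straddles_of_mem_frontier hcube (hy j hj), ?_⟩
          rw [Finset.mem_coe, Fintype.mem_piFinset]
          intro m
          obtain ⟨hlamy₁, hlamy₂⟩ :=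
            mul_mem_Icc_add_one_of_le (hlam m) (hlamM m) (hcube m (mem_univ m))
          refine Int.sub_floor_mem_Icc_of_abs_sub_le (x := c m + lam m * y j m - t m)
            ⟨by linarith, by linarith⟩ ?_
          convert hyj j hj m using 2
          ring
        · intro j _ j' _ h
          obtain ⟨hk, hw⟩ := Prod.ext_iff.1 h
          dsimp only at hk hw
          rw [hk] at hw
          exact sub_left_inj.1 hw
    _ = _ := by rw [Set.ncard_prod, Set.ncard_coe_finset, hwindow]

end Lattice

theorem max_one_le_mul_of_le {δ x : ℝ} (hδ : 0 < δ) (hx : δ ≤ x) :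
    max x 1 ≤ max 1 δ⁻¹ * x := by
  have hx₀ : 0 ≤ x := hδ.le.trans hx
  refine max_le (le_mul_of_one_le_left hx₀ (le_max_left _ _)) ?_
  calc (1 : ℝ) = δ⁻¹ * δ := (inv_mul_cancel₀ hδ.ne').symm
    _ ≤ max 1 δ⁻¹ * x := mul_le_mul (le_max_right _ _) hx hδ.le (by positivity)

theorem stmt_1_general (d : ℕ) (hd : 1 ≤ d)
    (R₀ : Set (Fin d → ℝ))
    (hsub : R₀ ⊆ Set.univ.pi fun _ => Set.Ioc (-(1/2) : ℝ) (1/2))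
    (hbdry : ∃ C : ℝ, 0 < C ∧ ∀ a : ℝ, 0 < a → a ≤ 1 →
      (Set.ncard {j : Fin d → ℤ |
        (Set.univ.pi (fun i => Set.Icc (a * (j i : ℝ)) (a * ((j i : ℝ) + 1))) ∩
          closure R₀).Nonempty ∧
        (Set.univ.pi (fun i => Set.Icc (a * (j i : ℝ)) (a * ((j i : ℝ) + 1))) ∩
          closure R₀ᶜ).Nonempty} : ℝ) ≤ C * a ^ ((1 : ℤ) - d))
    (t : Fin d → ℝ)
    (lam : ℕ → Fin d → ℝ) (hpos : ∀ n i, 0 < lam n i)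
    (htend : ∀ i, Tendsto (fun n => lam n i) atTop atTop) :
    ∃ C : ℝ, 0 < C ∧ ∀ n : ℕ, ∀ i : Fin d → ℤ,
      (Set.ncard {j : Fin d → ℤ |
        ((Set.univ.pi fun m => Set.Icc (t m + (j m : ℝ) - 2) (t m + (j m : ℝ) + 2)) ∩
          closure ((fun x m => (i m : ℝ) + lam n m * x m) '' R₀)).Nonempty ∧
        ((Set.univ.pi fun m => Set.Icc (t m + (j m : ℝ) - 2) (t m + (j m : ℝ) + 2)) ∩
          closure (((fun x m => (i m : ℝ) + lam n m * x m) '' R₀)ᶜ)).Nonempty} : ℝ)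
      ≤ C * (Finset.univ.sup' (Finset.univ_nonempty_iff.mpr ⟨⟨0, hd⟩⟩) (lam n)) ^ (d - 1) := by
  obtain ⟨C, hC, hbd⟩ := hbdry
  have hR : Bornology.IsBounded R₀ := (isCompact_univ_pi fun _ => isCompact_Icc).isBounded.subset
    (hsub.trans (pi_mono fun _ _ => Ioc_subset_Icc_self))
  let m₀ : Fin d := ⟨0, hd⟩
  obtain ⟨n₀, hn₀⟩ := ((htend m₀).mono_left Nat.cofinite_eq_atTop.le).exists_forall_le
  set K := max 1 (lam n₀ m₀)⁻¹
  refine ⟨C * K ^ (d - 1) * 6 ^ d, by positivity, fun n i => ?_⟩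
  set Mn := Finset.univ.sup' (Finset.univ_nonempty_iff.mpr ⟨m₀⟩) (lam n)
  have hlamM : ∀ m, lam n m ≤ max Mn 1 := fun m =>
    le_max_of_le_left (Finset.le_sup' (lam n) (Finset.mem_univ m))
  have hMK : max Mn 1 ≤ K * Mn :=
    max_one_le_mul_of_le (hpos n₀ m₀)
      ((hn₀ n).trans (Finset.le_sup' (lam n) (Finset.mem_univ m₀)))
  have hM : 0 < max Mn 1 := lt_max_of_lt_right one_pos
  have hball : ∀ j : Fin d → ℤ,
      (univ.pi fun m => Icc (t m + (j m : ℝ) - 2) (t m + (j m : ℝ) + 2)) =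
        closedBall (fun m => t m + j m) 2 := fun j => by
    rw [closedBall_pi _ zero_le_two]
    simp only [Real.closedBall_eq_Icc]
  simp only [hball]
  have hcount := ncard_straddling_closedBall_le hR (fun m => (i m : ℝ)) (hpos n) t 2 hM hlamM
  have hzpow : (max Mn 1)⁻¹ ^ ((1 : ℤ) - d) = (max Mn 1) ^ (d - 1) := by
    rw [inv_zpow', neg_sub, ← zpow_natCast, Nat.cast_sub hd, Nat.cast_one]
  calc _ ≤ ({k : Fin d → ℤ | Straddles (latticeCube (max Mn 1)⁻¹ k) R₀}.ncard : ℝ) * 6 ^ d := by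
        norm_num at hcount
        exact_mod_cast hcount
    _ ≤ C * (max Mn 1) ^ (d - 1) * 6 ^ d := by
        gcongr
        exact hzpow ▸ hbd _ (inv_pos.2 hM) (inv_le_one_of_one_le₀ (le_max_right _ _))
    _ ≤ C * (K * Mn) ^ (d - 1) * 6 ^ d := by gcongr
    _ = C * K ^ (d - 1) * 6 ^ d * Mn ^ (d - 1) := by ring

/-- the number of lattice points near the boundary of any translated
inflated region is `O((λₙ^max)^(d-1))`. -/
theorem stmt_1 (d : ℕ) (hd : 1 ≤ d)
    (R₀ : Set (Fin d → ℝ)) (hmeas : MeasurableSet R₀)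
    (hsub : R₀ ⊆ Set.univ.pi fun _ => Set.Ioc (-(1/2) : ℝ) (1/2))
    (hnbhd : R₀ ∈ 𝓝 (0 : Fin d → ℝ))
    (hbdry : ∃ C : ℝ, 0 < C ∧ ∀ a : ℝ, 0 < a → a ≤ 1 →
      (Set.ncard {j : Fin d → ℤ |
        (Set.univ.pi (fun i => Set.Icc (a * (j i : ℝ)) (a * ((j i : ℝ) + 1))) ∩
          closure R₀).Nonempty ∧
        (Set.univ.pi (fun i => Set.Icc (a * (j i : ℝ)) (a * ((j i : ℝ) + 1))) ∩
          closure R₀ᶜ).Nonempty} : ℝ) ≤ C * a ^ ((1 : ℤ) - d))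
    (t : Fin d → ℝ) (ht : ∀ i, t i ∈ Set.Icc (-(1/2) : ℝ) (1/2))
    (lam : ℕ → Fin d → ℝ) (hpos : ∀ n i, 0 < lam n i)
    (htend : ∀ i, Tendsto (fun n => lam n i) atTop atTop)
    (hmaxmin : ∃ C : ℝ, ∀ n i j, lam n i ≤ C * lam n j) :
    ∃ C : ℝ, 0 < C ∧ ∀ n : ℕ, ∀ i : Fin d → ℤ,
      (Set.ncard {j : Fin d → ℤ |
        ((Set.univ.pi fun m => Set.Icc (t m + (j m : ℝ) - 2) (t m + (j m : ℝ) + 2)) ∩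
          closure ((fun x m => (i m : ℝ) + lam n m * x m) '' R₀)).Nonempty ∧
        ((Set.univ.pi fun m => Set.Icc (t m + (j m : ℝ) - 2) (t m + (j m : ℝ) + 2)) ∩
          closure (((fun x m => (i m : ℝ) + lam n m * x m) '' R₀)ᶜ)).Nonempty} : ℝ)
      ≤ C * (Finset.univ.sup' (Finset.univ_nonempty_iff.mpr ⟨⟨0, hd⟩⟩) (lam n)) ^ (d - 1) :=
  stmt_1_general d hd R₀ hsub hbdry t lam hpos htend
end

section
/- Let d ≥ 1 and let R₀ ⊆ (-1/2, 1/2]^d be a convex set. Let t ∈ [-1/2, 1/2]^d and Z^d_t = t + Z^d. Then there exists a constant C > 0 (depending only on d and R₀) such that for every d × d diagonal matrix Δ with diagonal entries in [1, λ] (λ ≥ 1), every i ∈ Z^d, and every k ∈ Z^d with k ≠ 0: 0 ≤ #(Z^d_t ∩ Δ(i + R₀)) − #(Z^d_t ∩ Δ(i + R₀) ∩ (k + Δ(i + R₀))) ≤ C ‖k‖∞^d λ^{d-1}, where ‖k‖∞ = max₁≤j≤d |k_j|. -/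
/-!
Write `A` for the lattice points of `ℤ^d_t ∩ Δ(i + R₀)`, shifted back by `t`. The points counted
are those of `A \ (k + A)`, and since `Δ(i + R₀)` is convex, every line `j + ℤ k` meets `A` in a
run of consecutive points, so it contains at most one point of `A \ (k + A)`. Choosing a
coordinate `m₀` with `|k m₀| = ‖k‖∞` and sending `j` to the point of `j + ℤ k` whose `m₀`-th
coordinate lies in `[0, |k m₀|)` is therefore injective on `A \ (k + A)`. As `A` lies in a box
with sides `Δ m ≤ λ`, the image lies in a box with one side `|k m₀|` and the others of length
`O(λ ‖k‖∞)`, giving the bound `4^(d-1) ‖k‖∞^d λ^(d-1)`.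
-/

open Finset

section LatticeBoxes

variable {ι : Type*}

theorem Int.card_Icc_ceil_floor_le {a b : ℝ} (h : a ≤ b + 1) :
    (#(Icc ⌈a⌉ ⌊b⌋) : ℝ) ≤ b - a + 1 := by
  rw [Int.card_Icc]
  rcases le_or_gt (⌊b⌋ + 1 - ⌈a⌉) 0 with hneg | hpos
  · rw [Int.toNat_of_nonpos hneg, Nat.cast_zero]
    linarith
  · rw [← Int.cast_natCast, Int.toNat_of_nonneg hpos.le]
    push_cast
    linarith [Int.floor_le b, Int.le_ceil a]

theorem subset_Icc_of_abs_sub_le [Fintype ι] [DecidableEq ι] {T : Set (ι → ℤ)} {c ρ : ι → ℝ}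
    (hT : ∀ j ∈ T, ∀ m, |(j m : ℝ) - c m| ≤ ρ m) :
    T ⊆ Icc (fun m => ⌈c m - ρ m⌉) (fun m => ⌊c m + ρ m⌋) := by
  intro j hj
  have h m := abs_le.mp (hT j hj m)
  exact Finset.mem_Icc.mpr
    ⟨fun m => Int.ceil_le.mpr (by linarith [h m]), fun m => Int.le_floor.mpr (by linarith [h m])⟩

theorem ncard_le_prod_of_abs_sub_le [Fintype ι] [DecidableEq ι] {T : Set (ι → ℤ)}
    {c ρ : ι → ℝ} (hρ : ∀ m, 0 ≤ ρ m) (hT : ∀ j ∈ T, ∀ m, |(j m : ℝ) - c m| ≤ ρ m) :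
    (T.ncard : ℝ) ≤ ∏ m, (2 * ρ m + 1) := by
  calc (T.ncard : ℝ) ≤ #(Icc (fun m => ⌈c m - ρ m⌉) (fun m => ⌊c m + ρ m⌋)) := by
        exact_mod_cast (Set.ncard_le_ncard (subset_Icc_of_abs_sub_le hT)).trans_eq
          (Set.ncard_coe_finset _)
    _ = ∏ m, (#(Icc ⌈c m - ρ m⌉ ⌊c m + ρ m⌋) : ℝ) := by
        rw [Pi.card_Icc]
        push_cast
        rfl
    _ ≤ ∏ m, (2 * ρ m + 1) := by
        gcongr with m
        exact (Int.card_Icc_ceil_floor_le (by linarith [hρ m])).trans_eq (by ring)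

/-- The point of the line `j + ℤ k` whose `m₀`-th coordinate lies in `[0, |k m₀|)`. -/
def reduceAlong (k : ι → ℤ) (m₀ : ι) (j : ι → ℤ) : ι → ℤ := j - (j m₀ / k m₀) • k

theorem reduceAlong_apply_self (k : ι → ℤ) (m₀ : ι) (j : ι → ℤ) :
    reduceAlong k m₀ j m₀ = j m₀ % k m₀ := by
  rw [Int.emod_def, reduceAlong, Pi.sub_apply, Pi.smul_apply, smul_eq_mul, mul_comm]

theorem abs_reduceAlong_apply_self_sub_le {k : ι → ℤ} {m₀ : ι} (hk : k m₀ ≠ 0) (j : ι → ℤ) :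
    |(reduceAlong k m₀ j m₀ : ℝ) - (|(k m₀ : ℝ)| - 1) / 2| ≤ (|(k m₀ : ℝ)| - 1) / 2 := by
  have h₀ : (0 : ℝ) ≤ (j m₀ % k m₀ : ℤ) := by exact_mod_cast Int.emod_nonneg _ hk
  have h₁ : ((j m₀ % k m₀ : ℤ) : ℝ) ≤ |(k m₀ : ℝ)| - 1 := by
    exact_mod_cast Int.le_sub_one_of_lt (Int.emod_lt_abs _ hk)
  rw [reduceAlong_apply_self, abs_le]
  constructor <;> linarith

/-- `reduceAlong` subtracts `(j m₀ - r) • (k / k m₀)`, where `0 ≤ r < |k m₀|` and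
`|k / k m₀| ≤ 1`. -/
theorem abs_reduceAlong_sub_le {k : ι → ℤ} {m₀ : ι} (hk : k m₀ ≠ 0)
    (hmax : ∀ m, |k m| ≤ |k m₀|) {j : ι → ℤ} {c ρ : ι → ℝ}
    (hj : ∀ m, |(j m : ℝ) - c m| ≤ ρ m) (m : ι) :
    |(reduceAlong k m₀ j m : ℝ) - (c m - c m₀ * (k m / k m₀))| ≤
      ρ m + ρ m₀ + (|(k m₀ : ℝ)| - 1) := by
  set q : ℝ := k m / k m₀
  set r : ℤ := j m₀ % k m₀
  have hk' : (k m₀ : ℝ) ≠ 0 := by exact_mod_cast hk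
  have hq : |q| ≤ 1 := by
    rw [abs_div, div_le_one (by positivity)]
    exact_mod_cast hmax m
  have hr : |(r : ℝ)| ≤ |(k m₀ : ℝ)| - 1 := by
    rw [abs_of_nonneg (by exact_mod_cast Int.emod_nonneg _ hk)]
    exact_mod_cast Int.le_sub_one_of_lt (Int.emod_lt_abs _ hk)
  have hdiv : ((j m₀ / k m₀ : ℤ) : ℝ) * k m = (j m₀ - r) * q := by
    have h : ((j m₀ : ℝ) - r) = ((j m₀ / k m₀ : ℤ) : ℝ) * k m₀ := by
      rw [sub_eq_iff_eq_add]
      exact_mod_cast (Int.ediv_mul_add_emod (j m₀) (k m₀)).symm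
    rw [h, mul_assoc, mul_div_cancel₀ _ hk']
  have hsplit : (reduceAlong k m₀ j m : ℝ) - (c m - c m₀ * q) =
      ((j m : ℝ) - c m) - ((j m₀ : ℝ) - c m₀) * q + r * q := by
    simp only [reduceAlong, Pi.sub_apply, Pi.smul_apply, smul_eq_mul]
    push_cast
    rw [hdiv]
    ring
  rw [hsplit]
  calc _ ≤ |(j m : ℝ) - c m| + |((j m₀ : ℝ) - c m₀)| * |q| + |(r : ℝ)| * |q| := by
        rw [← abs_mul, ← abs_mul]
        exact (abs_add_le _ _).trans (add_le_add_left (abs_sub _ _) _)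
    _ ≤ ρ m + ρ m₀ * 1 + (|(k m₀ : ℝ)| - 1) * 1 := by
        gcongr
        · exact hj m
        · exact (abs_nonneg _).trans (hj m₀)
        · exact hj m₀
        · exact (abs_nonneg _).trans hr
    _ = _ := by ring

theorem injOn_reduceAlong {T : Set (ι → ℤ)} {k : ι → ℤ} (m₀ : ι)
    (hline : ∀ j ∈ T, ∀ e : ℤ, j + e • k ∈ T → e = 0) : Set.InjOn (reduceAlong k m₀) T := by
  intro j hj j' hj' h
  have hj'_eq : j' = j + (j' m₀ / k m₀ - j m₀ / k m₀) • k := by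
    ext m
    have hm := congrFun h m
    simp only [reduceAlong, Pi.sub_apply, Pi.add_apply, Pi.smul_apply, smul_eq_mul] at hm ⊢
    linarith
  rw [hj'_eq, hline j hj (j' m₀ / k m₀ - j m₀ / k m₀) (hj'_eq ▸ hj'), zero_smul, add_zero]

theorem ncard_le_of_unique_on_lines [Fintype ι] [DecidableEq ι] {T : Set (ι → ℤ)}
    {k : ι → ℤ} {m₀ : ι} (hk : k m₀ ≠ 0) (hmax : ∀ m, |k m| ≤ |k m₀|) {c ρ : ι → ℝ}
    (hρ : ∀ m, 0 ≤ ρ m) (hT : ∀ j ∈ T, ∀ m, |(j m : ℝ) - c m| ≤ ρ m)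
    (hline : ∀ j ∈ T, ∀ e : ℤ, j + e • k ∈ T → e = 0) :
    (T.ncard : ℝ) ≤
      |(k m₀ : ℝ)| * ∏ m ∈ univ.erase m₀, (2 * (ρ m + ρ m₀ + |(k m₀ : ℝ)|) - 1) := by
  have hK : (1 : ℝ) ≤ |(k m₀ : ℝ)| := by exact_mod_cast Int.one_le_abs hk
  let c' m : ℝ := if m = m₀ then (|(k m₀ : ℝ)| - 1) / 2 else c m - c m₀ * (k m / k m₀)
  let ρ' m : ℝ := if m = m₀ then (|(k m₀ : ℝ)| - 1) / 2 else ρ m + ρ m₀ + (|(k m₀ : ℝ)| - 1)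
  have hbox : ∀ j ∈ reduceAlong k m₀ '' T, ∀ m, |(j m : ℝ) - c' m| ≤ ρ' m := by
    rintro _ ⟨j, hj, rfl⟩ m
    by_cases hm : m = m₀
    · subst hm
      simpa only [c', ρ', if_pos] using abs_reduceAlong_apply_self_sub_le hk j
    · simpa only [c', ρ', if_neg hm] using abs_reduceAlong_sub_le hk hmax (hT j hj) m
  calc (T.ncard : ℝ) = (reduceAlong k m₀ '' T).ncard := by
        rw [(injOn_reduceAlong m₀ hline).ncard_image]
    _ ≤ ∏ m, (2 * ρ' m + 1) := ncard_le_prod_of_abs_sub_le (fun m => ?_) hbox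
    _ = |(k m₀ : ℝ)| * ∏ m ∈ univ.erase m₀, (2 * (ρ m + ρ m₀ + |(k m₀ : ℝ)|) - 1) := by
      rw [← mul_prod_erase univ _ (mem_univ m₀)]
      congr 1
      · simp only [ρ', if_pos]
        ring
      · refine prod_congr rfl fun m hm => ?_
        simp only [ρ', if_neg (ne_of_mem_erase hm)]
        ring
  simp only [ρ']
  split_ifs <;> linarith [hρ m, hρ m₀]

theorem mul_prod_erase_le_of_mem_Icc [Fintype ι] [DecidableEq ι] {K lam : ℝ} (hK : 1 ≤ K)
    {del : ι → ℝ} (hdel : ∀ m, del m ∈ Set.Icc 1 lam) (m₀ : ι) :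
    K * ∏ m ∈ univ.erase m₀, (2 * (del m / 2 + del m₀ / 2 + K) - 1) ≤
      4 ^ (Fintype.card ι - 1) * K ^ Fintype.card ι * lam ^ (Fintype.card ι - 1) := by
  have hlam : 1 ≤ lam := (hdel m₀).1.trans (hdel m₀).2
  have hpow : K ^ Fintype.card ι = K * K ^ (Fintype.card ι - 1) := by
    rw [← pow_succ', Nat.sub_add_cancel (Fintype.card_pos_iff.mpr ⟨m₀⟩)]
  calc _ ≤ K * ∏ m ∈ univ.erase m₀, (4 * lam * K) := by
        refine mul_le_mul_of_nonneg_left (prod_le_prod (fun m _ => ?_) fun m _ => ?_)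
          (by linarith)
        · linarith [(hdel m).1, (hdel m₀).1]
        · nlinarith [mul_nonneg (by linarith : (0 : ℝ) ≤ 2 * lam - 1)
            (by linarith : (0 : ℝ) ≤ 2 * K - 1), (hdel m).2, (hdel m₀).2]
    _ = _ := by
        rw [prod_const, card_erase_of_mem (mem_univ _), card_univ, hpow]
        ring

theorem exists_sup'_abs_eq [Fintype ι] (h : (univ : Finset ι).Nonempty) {k : ι → ℤ}
    (hk : k ≠ 0) : ∃ m₀, k m₀ ≠ 0 ∧ (∀ m, |k m| ≤ |k m₀|) ∧
      univ.sup' h (fun m => |(k m : ℝ)|) = |(k m₀ : ℝ)| := by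
  obtain ⟨m₀, -, hmax⟩ := exists_max_image univ (fun m => |k m|) h
  replace hmax m : |k m| ≤ |k m₀| := hmax m (mem_univ m)
  refine ⟨m₀, fun h => hk <| funext fun m => by simpa [h] using hmax m, hmax, ?_⟩
  exact le_antisymm (sup'_le _ _ fun m _ => by exact_mod_cast hmax m)
    (le_sup' (fun m => |(k m : ℝ)|) (mem_univ m₀))

end LatticeBoxes

section ConvexLatticePoints

variable {ι : Type*}

def latticePoints (t : ι → ℝ) (S : Set (ι → ℝ)) : Set (ι → ℤ) :=
  {j | (fun m => t m + (j m : ℝ)) ∈ S}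

theorem mem_latticePoints_image_add_iff (f : (ι → ℝ) → ι → ℝ) (R : Set (ι → ℝ)) (t : ι → ℝ)
    (k j : ι → ℤ) :
    j ∈ latticePoints t ((fun x m => (k m : ℝ) + f x m) '' R) ↔
      j - k ∈ latticePoints t (f '' R) := by
  simp only [latticePoints, Set.mem_ofPred_eq, Set.mem_image, funext_iff, Pi.sub_apply,
    Int.cast_sub]
  refine exists_congr fun x => and_congr_right fun _ => forall_congr' fun m => ?_
  constructor <;> intro h <;> linarith

theorem Convex.add_smul_sub_mem_latticePoints {S : Set (ι → ℝ)} (hS : Convex ℝ S)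
    {t : ι → ℝ} {j k : ι → ℤ} {e : ℤ} (he : 1 ≤ e) (hj : j ∈ latticePoints t S)
    (hje : j + e • k ∈ latticePoints t S) : j + e • k - k ∈ latticePoints t S := by
  have he' : (1 : ℝ) ≤ e := by exact_mod_cast he
  have key := hS.add_smul_mem (y := fun m => (e : ℝ) * k m) hj ?_ (t := (e - 1) / e)
    ⟨div_nonneg (by linarith) (by linarith), div_le_one_of_le₀ (by linarith) (by linarith)⟩
  · change (fun m => t m + ((j + e • k - k) m : ℝ)) ∈ S
    convert key using 1
    ext m
    simp only [Pi.add_apply, Pi.sub_apply, Pi.smul_apply, smul_eq_mul, Int.cast_sub,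
      Int.cast_add, Int.cast_mul]
    field_simp
    ring
  · change (fun m => t m + ((j + e • k) m : ℝ)) ∈ S at hje
    convert hje using 1
    ext m
    simp only [Pi.add_apply, Pi.smul_apply, smul_eq_mul, Int.cast_add, Int.cast_mul]
    ring

theorem Convex.eq_zero_of_add_smul_mem_sdiff {S : Set (ι → ℝ)} (hS : Convex ℝ S)
    {t : ι → ℝ} {j k : ι → ℤ} {e : ℤ}
    (hj : j ∈ latticePoints t S \ {j | j - k ∈ latticePoints t S})
    (hje : j + e • k ∈ latticePoints t S \ {j | j - k ∈ latticePoints t S}) : e = 0 := by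
  rcases lt_trichotomy e 0 with hneg | hzero | hpos
  · have hj' : j + e • k + (-e) • k ∈ latticePoints t S := by
      rw [neg_smul, add_neg_cancel_right]
      exact hj.1
    have := hS.add_smul_sub_mem_latticePoints (by omega) hje.1 hj'
    rw [neg_smul, add_neg_cancel_right] at this
    exact absurd this hj.2
  · exact hzero
  · exact absurd (hS.add_smul_sub_mem_latticePoints hpos hj.1 hje.1) hje.2

theorem Convex.image_mul_add {R : Set (ι → ℝ)} (hR : Convex ℝ R) (del a : ι → ℝ) :
    Convex ℝ ((fun x m => del m * (a m + x m)) '' R) := by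
  rw [show (fun x m => del m * (a m + x m)) = LinearMap.mulLeft ℝ del ∘ (a +ᵥ ·) from rfl,
    Set.image_comp, Set.image_vadd]
  exact (hR.vadd a).linear_image _

theorem abs_sub_le_of_mem_latticePoints_image {R : Set (ι → ℝ)}
    (hR : R ⊆ Set.univ.pi fun _ => Set.Icc (-(1 / 2)) (1 / 2)) {del a t : ι → ℝ}
    (hdel : ∀ m, 0 ≤ del m) :
    ∀ j ∈ latticePoints t ((fun x m => del m * (a m + x m)) '' R), ∀ m,
      |(j m : ℝ) - (del m * a m - t m)| ≤ del m / 2 := by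
  rintro j ⟨x, hx, hxj⟩ m
  have hjm := congrFun hxj m
  have hxm := hR hx m (Set.mem_univ m)
  simp only [Set.mem_Icc] at hjm hxm
  rw [abs_le]
  constructor <;> nlinarith [hdel m]

end ConvexLatticePoints

theorem stmt_6_general (d : ℕ) (hd : 1 ≤ d)
    (R₀ : Set (Fin d → ℝ)) (hconv : Convex ℝ R₀)
    (hsub : R₀ ⊆ Set.univ.pi fun _ => Set.Ioc (-(1/2) : ℝ) (1/2))
    (t : Fin d → ℝ) :
    ∃ C : ℝ, 0 < C ∧ ∀ lam : ℝ, 1 ≤ lam → ∀ del : Fin d → ℝ,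
      (∀ j, del j ∈ Set.Icc 1 lam) → ∀ i k : Fin d → ℤ, k ≠ 0 →
      0 ≤ (Set.ncard {j : Fin d → ℤ |
            (fun m => t m + (j m : ℝ)) ∈
              (fun x m => del m * ((i m : ℝ) + x m)) '' R₀} : ℝ)
          - (Set.ncard {j : Fin d → ℤ |
            (fun m => t m + (j m : ℝ)) ∈
              (fun x m => del m * ((i m : ℝ) + x m)) '' R₀ ∩
                (fun x m => (k m : ℝ) + del m * ((i m : ℝ) + x m)) '' R₀} : ℝ) ∧
      (Set.ncard {j : Fin d → ℤ |
            (fun m => t m + (j m : ℝ)) ∈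
              (fun x m => del m * ((i m : ℝ) + x m)) '' R₀} : ℝ)
          - (Set.ncard {j : Fin d → ℤ |
            (fun m => t m + (j m : ℝ)) ∈
              (fun x m => del m * ((i m : ℝ) + x m)) '' R₀ ∩
                (fun x m => (k m : ℝ) + del m * ((i m : ℝ) + x m)) '' R₀} : ℝ)
        ≤ C * (Finset.univ.sup' (Finset.univ_nonempty_iff.mpr ⟨⟨0, hd⟩⟩)
                (fun j => |(k j : ℝ)|)) ^ d * lam ^ (d - 1) := by
  refine ⟨4 ^ (d - 1), by positivity, fun lam _ del hdel i k hk => ?_⟩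
  set A := latticePoints t ((fun x m => del m * ((i m : ℝ) + x m)) '' R₀)
  obtain ⟨m₀, hk₀, hmax, hsup⟩ := exists_sup'_abs_eq (univ_nonempty_iff.mpr ⟨⟨0, hd⟩⟩) hk
  have hbox := abs_sub_le_of_mem_latticePoints_image (a := fun m => (i m : ℝ)) (t := t)
    (hsub.trans (Set.pi_mono fun _ _ => Set.Ioc_subset_Icc_self))
    fun m => zero_le_one.trans (hdel m).1
  have hfin : A.Finite := (Finset.finite_toSet _).subset (subset_Icc_of_abs_sub_le hbox)
  have hinter : {j : Fin d → ℤ | (fun m => t m + (j m : ℝ)) ∈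
      (fun x m => del m * ((i m : ℝ) + x m)) '' R₀ ∩
        (fun x m => (k m : ℝ) + del m * ((i m : ℝ) + x m)) '' R₀} = A ∩ {j | j - k ∈ A} :=
    Set.ext fun j => and_congr_right' (mem_latticePoints_image_add_iff _ R₀ t k j)
  change 0 ≤ (A.ncard : ℝ) - _ ∧ (A.ncard : ℝ) - _ ≤ _
  rw [hinter, hsup, ← Set.ncard_inter_add_ncard_sdiff_eq_ncard A {j | j - k ∈ A} hfin]
  push_cast
  rw [add_sub_cancel_left]
  refine ⟨by positivity, ?_⟩
  calc _ ≤ |(k m₀ : ℝ)| * ∏ m ∈ univ.erase m₀, (2 * (del m / 2 + del m₀ / 2 + |(k m₀ : ℝ)|) - 1) :=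
        ncard_le_of_unique_on_lines hk₀ hmax (fun m => by linarith [(hdel m).1])
          (fun j hj => hbox j hj.1)
          fun j hj e hje => (hconv.image_mul_add _ _).eq_zero_of_add_smul_mem_sdiff hj hje
    _ ≤ _ := by
        have hK : (1 : ℝ) ≤ |(k m₀ : ℝ)| := by exact_mod_cast Int.one_le_abs hk₀
        simpa only [Fintype.card_fin] using mul_prod_erase_le_of_mem_Icc hK hdel m₀

/-- for a convex template, the number of lattice points in a translated
inflated copy that are lost upon intersecting with a nonzero integer translate is
at most `C ‖k‖∞^d λ^(d-1)`. -/
theorem stmt_6 (d : ℕ) (hd : 1 ≤ d)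
    (R₀ : Set (Fin d → ℝ)) (hconv : Convex ℝ R₀)
    (hsub : R₀ ⊆ Set.univ.pi fun _ => Set.Ioc (-(1/2) : ℝ) (1/2))
    (t : Fin d → ℝ) (ht : ∀ i, t i ∈ Set.Icc (-(1/2) : ℝ) (1/2)) :
    ∃ C : ℝ, 0 < C ∧ ∀ lam : ℝ, 1 ≤ lam → ∀ del : Fin d → ℝ,
      (∀ j, del j ∈ Set.Icc 1 lam) → ∀ i k : Fin d → ℤ, k ≠ 0 →
      0 ≤ (Set.ncard {j : Fin d → ℤ |
            (fun m => t m + (j m : ℝ)) ∈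
              (fun x m => del m * ((i m : ℝ) + x m)) '' R₀} : ℝ)
          - (Set.ncard {j : Fin d → ℤ |
            (fun m => t m + (j m : ℝ)) ∈
              (fun x m => del m * ((i m : ℝ) + x m)) '' R₀ ∩
                (fun x m => (k m : ℝ) + del m * ((i m : ℝ) + x m)) '' R₀} : ℝ) ∧
      (Set.ncard {j : Fin d → ℤ |
            (fun m => t m + (j m : ℝ)) ∈
              (fun x m => del m * ((i m : ℝ) + x m)) '' R₀} : ℝ)
          - (Set.ncard {j : Fin d → ℤ |
            (fun m => t m + (j m : ℝ)) ∈
              (fun x m => del m * ((i m : ℝ) + x m)) '' R₀ ∩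
                (fun x m => (k m : ℝ) + del m * ((i m : ℝ) + x m)) '' R₀} : ℝ)
        ≤ C * (Finset.univ.sup' (Finset.univ_nonempty_iff.mpr ⟨⟨0, hd⟩⟩)
                (fun j => |(k j : ℝ)|)) ^ d * lam ^ (d - 1) :=
  stmt_6_general d hd R₀ hconv hsub t
end

section
/- Let B = {x ∈ ℝ² : ‖x − c‖ ≤ r} be a closed disk in ℝ² of radius r > 0 centered at c, where ‖·‖ is the Euclidean norm. Then K₀(B) = 1 − 16/(3π²). -/
open MeasureTheory Filter Topology

/-- `K₀(R) = |R|⁻³ ∫ |(x + R) ∩ R|² dx` for subsets of the Euclidean plane. -/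
noncomputable def K0E2 (R : Set (EuclideanSpace ℝ (Fin 2))) : ℝ :=
  (∫ x : EuclideanSpace ℝ (Fin 2), ((volume ((fun y => x + y) '' R ∩ R)).toReal) ^ 2) /
    ((volume R).toReal) ^ 3

open Set Real intervalIntegral

noncomputable def gL (d : ℝ) : ℝ := ∫ t in (d/2)..1, Real.sqrt (1 - t^2)

noncomputable def aa (y : ℝ) : ℝ := Real.arcsin (y/2)
noncomputable def ss (y : ℝ) : ℝ := Real.sqrt (1 - y^2/4)
noncomputable def pp (y : ℝ) : ℝ := aa y / 2 - y * ss y * (1 - y^2/2)/4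

lemma gL_eq_zero {d : ℝ} (hd : 2 ≤ d) : gL d = 0 := by
  unfold gL
  have h : EqOn (fun t : ℝ => Real.sqrt (1 - t^2)) (fun _ => (0:ℝ)) (Set.uIcc (d/2) 1) := by
    intro t ht
    rw [Set.uIcc_of_ge (by linarith)] at ht
    have h1 : (1:ℝ) ≤ t := ht.1
    simp only
    rw [Real.sqrt_eq_zero']
    nlinarith
  rw [intervalIntegral.integral_congr h]; simp

lemma continuous_sqrt_one_sub_sq : Continuous (fun t : ℝ => Real.sqrt (1 - t^2)) :=
  Real.continuous_sqrt.comp (by continuity)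

lemma hasDerivAt_H {t : ℝ} (h1 : -1 < t) (h2 : t < 1) :
    HasDerivAt (fun t => (t * Real.sqrt (1 - t^2) + Real.arcsin t)/2) (Real.sqrt (1 - t^2)) t := by
  have hpos : 0 < 1 - t^2 := by nlinarith
  have hs0 : Real.sqrt (1 - t^2) ≠ 0 := by positivity
  have hin : HasDerivAt (fun t : ℝ => 1 - t^2) (-(2*t)) t := by
    simpa using ((hasDerivAt_pow 2 t).const_sub 1)
  have hs : HasDerivAt (fun t : ℝ => Real.sqrt (1 - t^2))
      (1 / (2 * Real.sqrt (1 - t^2)) * (-(2*t))) t :=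
    (Real.hasDerivAt_sqrt hpos.ne').comp t hin
  have ha : HasDerivAt Real.arcsin (1 / Real.sqrt (1 - t^2)) t :=
    Real.hasDerivAt_arcsin (by linarith) (by linarith)
  have h := (((hasDerivAt_id t).mul hs).add ha).div_const 2
  refine h.congr_deriv (Eq.symm ?_)
  have hsq : Real.sqrt (1 - t^2)^2 = 1 - t^2 := Real.sq_sqrt hpos.le
  simp only [id_eq]
  rw [eq_div_iff (two_ne_zero)]
  field_simp
  linear_combination hsq

lemma gL_eq {d : ℝ} (h0 : 0 ≤ d) (h2 : d ≤ 2) :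
    gL d = π/4 - d/4 * ss d - aa d / 2 := by
  have hle : d/2 ≤ 1 := by linarith
  have hcont : ContinuousOn (fun t : ℝ => (t * Real.sqrt (1 - t^2) + Real.arcsin t)/2)
      (Icc (d/2) 1) :=
    (((continuous_id.mul continuous_sqrt_one_sub_sq).add Real.continuous_arcsin).div_const
      2).continuousOn
  have hint : IntervalIntegrable (fun t : ℝ => Real.sqrt (1 - t^2)) volume (d/2) 1 :=
    continuous_sqrt_one_sub_sq.intervalIntegrable _ _
  have hftc := intervalIntegral.integral_eq_sub_of_hasDerivAt_of_le hle hcont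
      (fun t ht => hasDerivAt_H (by constructor <;> nlinarith [ht.1, ht.2] : -1 < t ∧ t < 1).1
        (by nlinarith [ht.1, ht.2])) hint
  unfold gL aa ss
  rw [hftc, Real.arcsin_one]
  rw [show (1:ℝ) - 1^2 = 0 by ring, Real.sqrt_zero,
    show (1:ℝ) - (d/2)^2 = 1 - d^2/4 by ring]
  ring
section derivs
variable {y : ℝ} (h1 : -2 < y) (h2 : y < 2)
include h1 h2

lemma ss_pos : 0 < ss y := Real.sqrt_pos.2 (by nlinarith)

lemma ss_sq : ss y ^ 2 = 1 - y^2/4 := Real.sq_sqrt (by nlinarith)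

lemma hasDerivAt_aa : HasDerivAt aa (1/(2 * ss y)) y := by
  have hd : HasDerivAt (fun y : ℝ => y/2) (1/2) y := (hasDerivAt_id y).div_const 2
  have h := (Real.hasDerivAt_arcsin (by intro h; rw [div_eq_iff (two_ne_zero)] at h; linarith)
      (by intro h; rw [div_eq_iff (two_ne_zero)] at h; linarith)).comp y hd
  refine h.congr_deriv (Eq.symm ?_)
  unfold ss
  rw [show (1:ℝ) - (y/2)^2 = 1 - y^2/4 by ring]
  ring

lemma hasDerivAt_ss : HasDerivAt ss (-y/(4 * ss y)) y := by
  have hin : HasDerivAt (fun y : ℝ => 1 - y^2/4) (-(y/2)) y := by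
    have := (((hasDerivAt_pow 2 y).div_const 4).const_sub 1)
    refine this.congr_deriv (Eq.symm ?_)
    norm_num
    ring
  have h := (Real.hasDerivAt_sqrt (x := 1 - y^2/4) (by nlinarith)).comp y hin
  refine h.congr_deriv (Eq.symm ?_)
  unfold ss; ring

lemma hasDerivAt_pp : HasDerivAt pp (y^2 * ss y / 2) y := by
  have ha := hasDerivAt_aa h1 h2
  have hs := hasDerivAt_ss h1 h2
  have h := ((ha.div_const 2).sub
    ((((hasDerivAt_id y).mul hs).mul
      (((hasDerivAt_pow 2 y).div_const 2).const_sub 1)).div_const 4))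
  refine h.congr_deriv (Eq.symm ?_)
  have hsq := ss_sq h1 h2
  have hs0 := (ss_pos h1 h2).ne'
  simp only [id_eq, Pi.mul_apply]
  field_simp
  linear_combination (8 * y^2 + 16) * hsq

lemma hasDerivAt_P3 :
    HasDerivAt (fun y => (y^2/2 - 1) * aa y^2 + y * ss y * aa y - y^2/4) (y * aa y^2) y := by
  have ha := hasDerivAt_aa h1 h2
  have hs := hasDerivAt_ss h1 h2
  have h := (((((hasDerivAt_pow 2 y).div_const 2).sub_const 1).mul (ha.pow 2)).add
      ((((hasDerivAt_id y).mul hs).mul ha))).sub ((hasDerivAt_pow 2 y).div_const 4)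
  refine h.congr_deriv (Eq.symm ?_)
  have hsq := ss_sq h1 h2
  have hs0 := (ss_pos h1 h2).ne'
  simp only [id_eq, Pi.mul_apply, Pi.pow_apply]
  field_simp
  linear_combination (-16 * aa y) * hsq

lemma hasDerivAt_P5 :
    HasDerivAt (fun y => (y^2/2 - 2) * aa y + y * ss y / 2 + aa y) (y * aa y) y := by
  have ha := hasDerivAt_aa h1 h2
  have hs := hasDerivAt_ss h1 h2
  have h := (((((hasDerivAt_pow 2 y).div_const 2).sub_const 2).mul ha).add
      (((hasDerivAt_id y).mul hs).div_const 2)).add ha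
  refine h.congr_deriv (Eq.symm ?_)
  have hsq := ss_sq h1 h2
  have hs0 := (ss_pos h1 h2).ne'
  simp only [id_eq]
  field_simp
  linear_combination (-8:ℝ) * hsq

lemma hasDerivAt_P6 :
    HasDerivAt (fun y => 2 * pp y * aa y - aa y^2/2 + y^2/8 - y^4/32)
      (y^2 * ss y * aa y) y := by
  have ha := hasDerivAt_aa h1 h2
  have hp := hasDerivAt_pp h1 h2
  have h := ((((hp.const_mul 2).mul ha).sub ((ha.pow 2).div_const 2)).add
      ((hasDerivAt_pow 2 y).div_const 8)).sub ((hasDerivAt_pow 4 y).div_const 32)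
  refine h.congr_deriv (Eq.symm ?_)
  have hsq := ss_sq h1 h2
  have hs0 := (ss_pos h1 h2).ne'
  unfold pp
  field_simp
  ring

end derivs

noncomputable def Phi (y : ℝ) : ℝ :=
  Real.pi^2 * y^2/32 + y^4/64 - y^6/384
  + ((y^2/2 - 1) * aa y^2 + y * ss y * aa y - y^2/4)/4
  - Real.pi/4 * pp y
  - Real.pi/4 * ((y^2/2 - 2) * aa y + y * ss y / 2 + aa y)
  + (2 * pp y * aa y - aa y^2/2 + y^2/8 - y^4/32)/4

lemma hasDerivAt_Phi {y : ℝ} (h1 : -2 < y) (h2 : y < 2) :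
    HasDerivAt Phi (y * (Real.pi/4 - y/4 * ss y - aa y/2)^2) y := by
  have hT1 : HasDerivAt (fun y : ℝ => Real.pi^2 * y^2/32) (Real.pi^2 * y/16) y := by
    have := ((hasDerivAt_pow 2 y).const_mul (Real.pi^2)).div_const 32
    refine this.congr_deriv (Eq.symm ?_); ring
  have hT2 : HasDerivAt (fun y : ℝ => y^4/64 - y^6/384) (y^3/16 - y^5/64) y := by
    have := ((hasDerivAt_pow 4 y).div_const 64).sub ((hasDerivAt_pow 6 y).div_const 384)
    refine this.congr_deriv (Eq.symm ?_)
    simp; ring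
  have h := ((((hT1.add hT2).add ((hasDerivAt_P3 h1 h2).div_const 4)).sub
      ((hasDerivAt_pp h1 h2).const_mul (Real.pi/4))).sub
      ((hasDerivAt_P5 h1 h2).const_mul (Real.pi/4))).add
      ((hasDerivAt_P6 h1 h2).div_const 4)
  have hsq := ss_sq h1 h2
  refine (congrArg (HasDerivAt · _ y) ?_).mpr (h.congr_deriv (Eq.symm ?_))
  · funext x; simp only [Phi, Pi.add_apply, Pi.sub_apply]; ring
  · linear_combination (y^3/16) * hsq

lemma continuous_aa : Continuous aa := Real.continuous_arcsin.comp (continuous_id.div_const 2)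
lemma continuous_ss : Continuous ss := Real.continuous_sqrt.comp (by continuity)
lemma continuous_pp : Continuous pp := by
  unfold pp
  exact (continuous_aa.div_const 2).sub
    (((continuous_id.mul continuous_ss).mul (by continuity)).div_const 4)
lemma continuous_Phi : Continuous Phi := by
  unfold Phi
  have h1 := continuous_aa
  have h2 := continuous_ss
  have h3 := continuous_pp
  fun_prop

lemma Phi_two : Phi 2 = Real.pi^2/32 - 1/6 := by
  have hss : ss 2 = 0 := by unfold ss; norm_num
  have haa : aa 2 = Real.pi/2 := by unfold aa; norm_num [Real.arcsin_one]
  have hpp : pp 2 = Real.pi/4 := by unfold pp; rw [hss, haa]; ring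
  unfold Phi; rw [hss, haa, hpp]; ring

lemma Phi_zero : Phi 0 = 0 := by
  have hss : ss 0 = 1 := by unfold ss; norm_num
  have haa : aa 0 = 0 := by unfold aa; norm_num [Real.arcsin_zero]
  have hpp : pp 0 = 0 := by unfold pp; rw [hss, haa]; ring
  unfold Phi; rw [hss, haa, hpp]; ring

lemma integral_J : ∫ y in (0:ℝ)..2, y * (4 * gL y)^2 = Real.pi^2/2 - 8/3 := by
  have hEq : EqOn (fun y : ℝ => y * (4 * gL y)^2)
      (fun y => 16 * (y * (Real.pi/4 - y/4 * ss y - aa y/2)^2)) (Set.uIcc 0 2) := by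
    intro t ht
    rw [Set.uIcc_of_le (by norm_num)] at ht
    simp only
    rw [gL_eq ht.1 ht.2]
    ring
  rw [intervalIntegral.integral_congr hEq, intervalIntegral.integral_const_mul]
  have hderiv : ∀ t ∈ Set.Ioo (0:ℝ) 2,
      HasDerivAt Phi (t * (Real.pi/4 - t/4*ss t - aa t/2)^2) t :=
    fun t ht => hasDerivAt_Phi (by linarith [ht.1]) ht.2
  have hcontPhi : ContinuousOn Phi (Set.Icc 0 2) := continuous_Phi.continuousOn
  have hcf : Continuous (fun t : ℝ => t * (Real.pi/4 - t/4*ss t - aa t/2)^2) := by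
    have h1 := continuous_aa
    have h2 := continuous_ss
    fun_prop
  rw [intervalIntegral.integral_eq_sub_of_hasDerivAt_of_le (by norm_num) hcontPhi hderiv
    (hcf.intervalIntegrable _ _)]
  rw [Phi_two, Phi_zero]
  ring

noncomputable section Geo

abbrev EE := EuclideanSpace ℝ (Fin 2)

def S2 (d : ℝ) : Set (ℝ × ℝ) :=
  {p : ℝ × ℝ | (p.1 - d)^2 + p.2^2 ≤ 1 ∧ p.1^2 + p.2^2 ≤ 1}

lemma gL_nonneg {d : ℝ} (hd : 0 ≤ d) : 0 ≤ gL d := by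
  rcases le_or_gt d 2 with h | h
  · exact intervalIntegral.integral_nonneg (by linarith) (fun t _ => Real.sqrt_nonneg _)
  · rw [gL_eq_zero h.le]

lemma measurableSet_S2 (d : ℝ) : MeasurableSet (S2 d) := by
  have : S2 d = {p : ℝ × ℝ | (p.1 - d)^2 + p.2^2 ≤ 1} ∩ {p : ℝ × ℝ | p.1^2 + p.2^2 ≤ 1} := by
    ext p; simp [S2, Set.mem_setOf_eq, Set.mem_inter_iff]
  rw [this]
  exact ((isClosed_le (by fun_prop) continuous_const).inter
    (isClosed_le (by fun_prop) continuous_const)).measurableSet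

lemma volume_S2 {d : ℝ} (h0 : 0 ≤ d) (h2 : d ≤ 2) :
    volume (S2 d) = ENNReal.ofReal (4 * gL d) := by
  have hle : d/2 ≤ 1 := by linarith
  set F : ℝ → ℝ := fun a => 2 * Real.sqrt (min (1-(a-d)^2) (1-a^2)) with hF
  -- slice volumes
  have hslice : ∀ a : ℝ, volume (Prod.mk a ⁻¹' S2 d) = ENNReal.ofReal (F a) := by
    intro a
    have hpre : Prod.mk a ⁻¹' S2 d = {b : ℝ | b^2 ≤ min (1-(a-d)^2) (1-a^2)} := by
      ext b
      simp only [S2, Set.mem_preimage, Set.mem_setOf_eq, le_min_iff]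
      constructor <;> intro h <;> exact ⟨by linarith [h.1, h.2], by linarith [h.1, h.2]⟩
    rw [hpre]
    set m := min (1-(a-d)^2) (1-a^2) with hm
    rcases le_or_gt 0 m with hm0 | hm0
    · have : {b : ℝ | b^2 ≤ m} = Set.Icc (-Real.sqrt m) (Real.sqrt m) := by
        ext b
        simp only [Set.mem_setOf_eq, Set.mem_Icc, ← abs_le]
        constructor
        · intro h; exact Real.abs_le_sqrt h
        · intro h; nlinarith [Real.sq_sqrt hm0, sq_abs b, abs_nonneg b]
      rw [this, Real.volume_Icc]
      congr 1; simp [hF]; ring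
    · have hempty : {b : ℝ | b^2 ≤ m} = ∅ := by
        ext b; simp only [Set.mem_setOf_eq, Set.mem_empty_iff_false, iff_false, not_le]
        nlinarith [sq_nonneg b]
      have hsz : Real.sqrt m = 0 := Real.sqrt_eq_zero'.2 hm0.le
      rw [hempty, measure_empty, hF]
      simp [← hm, hsz]
  -- continuity, support, integrability of F
  have hFc : Continuous F := by
    apply continuous_const.mul
    exact Real.continuous_sqrt.comp ((by fun_prop : Continuous fun a : ℝ => 1-(a-d)^2).min
      (by fun_prop))
  have hFsupp : HasCompactSupport F := by
    apply HasCompactSupport.intro (isCompact_Icc (a := (-1:ℝ)) (b := 1))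
    intro a ha
    simp only [Set.mem_Icc, not_and_or, not_le] at ha
    have h1 : 1 - a^2 < 0 := by rcases ha with h | h <;> nlinarith
    have : Real.sqrt (min (1-(a-d)^2) (1-a^2)) = 0 :=
      Real.sqrt_eq_zero'.2 (le_of_lt (lt_of_le_of_lt (min_le_right _ _) h1))
    simp [hF, this]
  have hFi : Integrable F := hFc.integrable_of_hasCompactSupport hFsupp
  -- the 1d auxiliary function
  set G : ℝ → ℝ := fun b => 2 * Real.sqrt (1 - b^2) with hG
  have hGc : Continuous G := continuous_const.mul continuous_sqrt_one_sub_sq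
  have hGsupp : HasCompactSupport G := by
    apply HasCompactSupport.intro (isCompact_Icc (a := (-1:ℝ)) (b := 1))
    intro a ha
    simp only [Set.mem_Icc, not_and_or, not_le] at ha
    have h1 : 1 - a^2 < 0 := by rcases ha with h | h <;> nlinarith
    simp [hG, Real.sqrt_eq_zero'.2 h1.le]
  have hGi : Integrable G := hGc.integrable_of_hasCompactSupport hGsupp
  have hIoi : ∫ a in Set.Ioi (d/2), G a = 2 * gL d := by
    rw [show Set.Ioi (d/2) = Set.Ioc (d/2) 1 ∪ Set.Ioi 1 from
      (Set.Ioc_union_Ioi_eq_Ioi hle).symm,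
      setIntegral_union (Set.Ioc_disjoint_Ioi le_rfl) measurableSet_Ioi
        hGi.integrableOn hGi.integrableOn]
    have hz : ∫ a in Set.Ioi (1:ℝ), G a = 0 := by
      rw [setIntegral_congr_fun measurableSet_Ioi
        (fun a (ha : 1 < a) => by
          show G a = (fun _ => (0:ℝ)) a
          simp [hG, Real.sqrt_eq_zero'.2 (by nlinarith : 1 - a^2 ≤ 0)])]
      simp
    rw [hz, ← intervalIntegral.integral_of_le hle]
    unfold gL
    rw [hG]
    rw [intervalIntegral.integral_const_mul]
    ring
  -- main computation
  rw [Measure.volume_eq_prod, Measure.prod_apply (measurableSet_S2 d)]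
  have : ∫⁻ a, volume (Prod.mk a ⁻¹' S2 d) = ∫⁻ a, ENNReal.ofReal (F a) := by
    simp_rw [hslice]
  rw [this, ← ofReal_integral_eq_lintegral_ofReal hFi
    (Filter.Eventually.of_forall fun a => by positivity)]
  congr 1
  rw [← integral_Iic_add_Ioi (b := d/2) hFi.integrableOn hFi.integrableOn]
  have hIoiF : ∫ a in Set.Ioi (d/2), F a = 2 * gL d := by
    rw [setIntegral_congr_fun measurableSet_Ioi (fun a (ha : d/2 < a) => by
      show F a = G a
      simp only [hF, hG]
      congr 1
      rw [min_eq_right (by nlinarith)])]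
    exact hIoi
  have hIicF : ∫ a in Set.Iic (d/2), F a = 2 * gL d := by
    have hEq : ∀ a ∈ Set.Iic (d/2), F a = G (d - a) := by
      intro a (ha : a ≤ d/2)
      simp only [hF, hG]
      rw [min_eq_left (by nlinarith), show (1:ℝ) - (a-d)^2 = 1 - (d-a)^2 by ring]
    rw [setIntegral_congr_fun measurableSet_Iic hEq]
    have hpre : (fun x => d - x) ⁻¹' Set.Ici (d/2) = Set.Iic (d/2) := by
      ext a; simp only [Set.mem_preimage, Set.mem_Ici, Set.mem_Iic]; constructor <;>
        intro h <;> linarith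
    rw [← hpre,
      (Measure.measurePreserving_sub_left (volume : Measure ℝ) d).setIntegral_preimage_emb
        (MeasurableEquiv.subLeft d).measurableEmbedding G (Set.Ici (d/2)),
      integral_Ici_eq_integral_Ioi]
    exact hIoi
  rw [hIoiF, hIicF]
  ring

end Geo

open Metric Pointwise

lemma sqrt_le_one_iff' {v : ℝ} : Real.sqrt v ≤ 1 ↔ v ≤ 1 := by
  constructor
  · intro h
    rcases le_or_gt v 0 with hv | hv
    · linarith
    · nlinarith [Real.sq_sqrt hv.le, Real.sqrt_nonneg v]
  · intro h
    rw [show (1:ℝ) = Real.sqrt 1 by simp]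
    exact (Real.sqrt_le_sqrt_iff (by norm_num)).2 h

lemma mem_cb (u y : EE) : y ∈ closedBall u 1 ↔ (y 0 - u 0)^2 + (y 1 - u 1)^2 ≤ 1 := by
  rw [mem_closedBall, EuclideanSpace.dist_eq, Fin.sum_univ_two, Real.dist_eq, Real.dist_eq,
    sq_abs, sq_abs, sqrt_le_one_iff']

lemma image_add_closedBall (x : EE) :
    (fun y => x + y) '' closedBall (0:EE) 1 = closedBall x 1 := by
  ext z
  simp only [Set.mem_image, mem_closedBall, dist_eq_norm]
  constructor
  · rintro ⟨b, hb, rfl⟩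
    simpa using hb
  · intro h
    exact ⟨z - x, by simpa using h, by abel⟩

lemma vol_inter (x : EE) :
    volume (closedBall x 1 ∩ closedBall (0:EE) 1) = ENNReal.ofReal (4 * gL ‖x‖) := by
  rcases le_or_gt ‖x‖ 2 with h2 | h2
  · -- rotation to the configuration (‖x‖, 0)
    set u : EE := EuclideanSpace.single 0 ‖x‖ with hu_def
    have hu : ‖u‖ = ‖x‖ := by
      rw [hu_def, EuclideanSpace.norm_single, norm_norm]
    set T := (Submodule.reflection (ℝ ∙ (u - x))ᗮ) with hT
    have hTu : T u = x := Submodule.reflection_sub hu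
    have himgcb : ∀ c : EE, T '' closedBall c 1 = closedBall (T c) 1 := by
      intro c; ext y
      simp only [Set.mem_image, mem_closedBall]
      constructor
      · rintro ⟨z, hz, rfl⟩
        rwa [T.dist_map]
      · intro hy
        refine ⟨T.symm y, ?_, T.apply_symm_apply y⟩
        have hdm := T.dist_map (T.symm y) c
        rw [T.apply_symm_apply] at hdm
        rwa [← hdm]
    have himg : closedBall x 1 ∩ closedBall (0:EE) 1
        = T '' (closedBall u 1 ∩ closedBall 0 1) := by
      rw [Set.image_inter T.injective, himgcb, himgcb, hTu, map_zero]
    have hmeas : MeasurableSet (closedBall u 1 ∩ closedBall (0:EE) 1) :=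
      measurableSet_closedBall.inter measurableSet_closedBall
    have hTpre : T '' (closedBall u 1 ∩ closedBall (0:EE) 1)
        = ⇑T.symm ⁻¹' (closedBall u 1 ∩ closedBall (0:EE) 1) := by
      ext y
      simp only [Set.mem_image, Set.mem_preimage]
      constructor
      · rintro ⟨z, hz, rfl⟩; simpa [T.symm_apply_apply] using hz
      · intro h; exact ⟨T.symm y, h, T.apply_symm_apply y⟩
    have hvolT : volume (closedBall x 1 ∩ closedBall (0:EE) 1)
        = volume (closedBall u 1 ∩ closedBall (0:EE) 1) := by
      rw [himg, hTpre, T.symm.measurePreserving.measure_preimage hmeas.nullMeasurableSet]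
    -- transfer to ℝ × ℝ
    set Φ : EE ≃ᵐ ℝ × ℝ :=
      (MeasurableEquiv.toLp 2 (Fin 2 → ℝ)).symm.trans MeasurableEquiv.finTwoArrow with hΦdef
    have hΦ : MeasurePreserving Φ volume volume :=
      (volume_preserving_finTwoArrow ℝ).comp
        (EuclideanSpace.volume_preserving_symm_measurableEquiv_toLp (Fin 2))
    have hpre : ⇑Φ ⁻¹' (S2 ‖x‖) = closedBall u 1 ∩ closedBall (0:EE) 1 := by
      ext y
      have hy0 : (Φ y).1 = y 0 := rfl
      have hy1 : (Φ y).2 = y 1 := rfl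
      simp only [Set.mem_preimage, S2, Set.mem_setOf_eq, hy0, hy1, Set.mem_inter_iff,
        mem_cb]
      have hu0 : u 0 = ‖x‖ := by simp [hu_def, EuclideanSpace.single_apply]
      have hu1 : u 1 = 0 := by simp [hu_def, EuclideanSpace.single_apply]
      have hz0 : (0:EE) 0 = 0 := rfl
      have hz1 : (0:EE) 1 = 0 := rfl
      rw [hu0, hu1, hz0, hz1]
      constructor <;> intro h <;> constructor <;> rcases h with ⟨ha, hb⟩ <;>
        [skip; skip; skip; skip] <;> nlinarith [ha, hb]
    have hvolΦ : volume (closedBall u 1 ∩ closedBall (0:EE) 1) = volume (S2 ‖x‖) := by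
      rw [← hpre, hΦ.measure_preimage (measurableSet_S2 _).nullMeasurableSet]
    rw [hvolT, hvolΦ, volume_S2 (norm_nonneg x) h2]
  · have hempty : closedBall x 1 ∩ closedBall (0:EE) 1 = ∅ := by
      ext y
      simp only [Set.mem_inter_iff, mem_closedBall, Set.mem_empty_iff_false, iff_false,
        not_and, not_le]
      intro h1
      have : ‖x‖ ≤ dist x y + dist y 0 := by
        rw [show ‖x‖ = dist x 0 by simp]
        exact dist_triangle x y 0
      have h1' : dist x y ≤ 1 := by rwa [dist_comm]
      linarith
    rw [hempty, gL_eq_zero h2.le]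
    simp


lemma volume_unit_closedBall : volume (closedBall (0:EE) 1) = ENNReal.ofReal Real.pi := by
  rw [EuclideanSpace.volume_closedBall]
  norm_num [Fintype.card_fin, Real.Gamma_two, Real.sq_sqrt Real.pi_nonneg]

lemma volume_unit_ball : volume (ball (0:EE) 1) = ENNReal.ofReal Real.pi := by
  rw [EuclideanSpace.volume_ball]
  norm_num [Fintype.card_fin, Real.Gamma_two, Real.sq_sqrt Real.pi_nonneg]

lemma integrand_eq (x : EE) :
    ((volume ((fun y => x + y) '' closedBall (0:EE) 1 ∩ closedBall (0:EE) 1)).toReal) ^ 2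
      = (fun y : ℝ => (4 * gL y)^2) ‖x‖ := by
  rw [image_add_closedBall, vol_inter, ENNReal.toReal_ofReal
    (by nlinarith [gL_nonneg (norm_nonneg x)])]

lemma K0_unit : K0E2 (closedBall (0:EE) 1) = 1 - 16 / (3 * Real.pi^2) := by
  have hN : (∫ x : EE, ((volume ((fun y => x + y) '' closedBall (0:EE) 1
      ∩ closedBall (0:EE) 1)).toReal) ^ 2)
      = 2 * (Real.pi * (Real.pi^2/2 - 8/3)) := by
    rw [show (fun x : EE => ((volume ((fun y => x + y) '' closedBall (0:EE) 1
        ∩ closedBall (0:EE) 1)).toReal) ^ 2) = fun x : EE => (fun y : ℝ => (4 * gL y)^2) ‖x‖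
      from funext integrand_eq]
    rw [integral_fun_norm_addHaar volume (fun y : ℝ => (4 * gL y)^2)]
    have hdim : Module.finrank ℝ EE = 2 := finrank_euclideanSpace_fin
    rw [hdim, measureReal_def, volume_unit_ball, ENNReal.toReal_ofReal Real.pi_nonneg]
    have hIoi2 : ∫ y in Set.Ioi (2:ℝ), y ^ (2-1) • (4 * gL y)^2 = 0 := by
      rw [setIntegral_congr_fun measurableSet_Ioi (fun y (hy : 2 < y) => by
        show y ^ (2-1) • (4 * gL y)^2 = (fun _ => (0:ℝ)) y
        simp [gL_eq_zero hy.le])]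
      simp
    have hcont : Continuous (fun y : ℝ =>
        y ^ (2-1) • (4 * (Real.pi/4 - y/4 * ss y - aa y/2))^2) := by
      have h1 := continuous_aa
      have h2 := continuous_ss
      fun_prop
    have hIOn : IntegrableOn (fun y : ℝ => y ^ (2-1) • (4 * gL y)^2) (Set.Ioc 0 2) := by
      apply (hcont.integrableOn_Ioc).congr_fun ?_ measurableSet_Ioc
      intro y hy
      simp only [smul_eq_mul]
      rw [gL_eq hy.1.le hy.2]
    have hIOn2 : IntegrableOn (fun y : ℝ => y ^ (2-1) • (4 * gL y)^2) (Set.Ioi 2) := by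
      apply (integrable_zero _ _ _).integrableOn.congr_fun ?_ measurableSet_Ioi
      intro y (hy : 2 < y)
      simp [gL_eq_zero hy.le]
    rw [show Set.Ioi (0:ℝ) = Set.Ioc 0 2 ∪ Set.Ioi 2 from
        (Set.Ioc_union_Ioi_eq_Ioi (by norm_num)).symm,
      setIntegral_union (Set.Ioc_disjoint_Ioi le_rfl) measurableSet_Ioi hIOn hIOn2,
      hIoi2, add_zero, ← intervalIntegral.integral_of_le (by norm_num : (0:ℝ) ≤ 2)]
    have : (∫ y in (0:ℝ)..2, y ^ (2-1) • (4 * gL y)^2) = ∫ y in (0:ℝ)..2, y * (4 * gL y)^2 := by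
      apply intervalIntegral.integral_congr
      intro y _
      simp
    rw [this, integral_J]
    simp
  unfold K0E2
  rw [hN, volume_unit_closedBall, ENNReal.toReal_ofReal Real.pi_nonneg]
  have hpi := Real.pi_ne_zero
  field_simp
  ring

/-- for a closed disk in `ℝ²`, `K₀ = 1 - 16/(3π²)`. -/
theorem stmt_11 (c : EuclideanSpace ℝ (Fin 2)) (r : ℝ) (hr : 0 < r) :
    K0E2 (Metric.closedBall c r) = 1 - 16 / (3 * Real.pi ^ 2) := by
  have hrne : r ≠ 0 := hr.ne'
  set B := closedBall (0:EE) 1 with hB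
  set φ : EE → EE := fun y => c + r • y with hφdef
  have h1 : closedBall c r = φ '' B := by
    ext z
    simp only [hφdef, hB, Set.mem_image, mem_closedBall, dist_eq_norm]
    constructor
    · intro h
      refine ⟨r⁻¹ • (z - c), ?_, ?_⟩
      · rw [sub_zero, norm_smul, norm_inv, Real.norm_eq_abs, abs_of_pos hr]
        rw [inv_mul_le_iff₀ hr, mul_one]
        exact h
      · rw [smul_smul, mul_inv_cancel₀ hrne, one_smul]
        abel
    · rintro ⟨b, hb, rfl⟩
      rw [sub_zero] at hb
      have : c + r • b - c = r • b := by abel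
      rw [this, norm_smul, Real.norm_eq_abs, abs_of_pos hr]
      nlinarith [norm_nonneg b]
  have hinj : Function.Injective φ := by
    intro a b h
    simp only [hφdef] at h
    have h2 : r • a = r • b := by
      have := congrArg (fun z => z - c) h
      simpa [add_sub_cancel_left] using this
    exact smul_right_injective EE hrne h2
  have hcomp : ∀ x : EE, (fun y => x + y) '' (φ '' B) ∩ φ '' B
      = φ '' ((fun y => r⁻¹ • x + y) '' B ∩ B) := by
    intro x
    have hfun : ((fun y => x + y) ∘ φ) = (φ ∘ fun y => r⁻¹ • x + y) := by
      funext y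
      simp only [Function.comp_apply, hφdef]
      rw [smul_add, smul_inv_smul₀ hrne]
      abel
    rw [Set.image_inter hinj, ← Set.image_comp, ← Set.image_comp, hfun]
  have hvol : ∀ S : Set EE, volume (φ '' S) = ENNReal.ofReal (r^2) * volume S := by
    intro S
    have hsplit : φ '' S = (fun y => c + y) '' ((fun y => r • y) '' S) := by
      rw [← Set.image_comp]; rfl
    have htrans : (fun y => c + y) '' ((fun y => r • y) '' S)
        = (fun y => -c + y) ⁻¹' ((fun y => r • y) '' S) := by
      ext z
      simp only [Set.mem_image, Set.mem_preimage]
      constructor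
      · rintro ⟨t, ht, rfl⟩
        simpa [neg_add_cancel_left] using ht
      · intro h
        exact ⟨-c + z, h, by abel⟩
    have hsmul : (fun y : EE => r • y) '' S = r • S := by
      rw [Set.image_smul]
    rw [hsplit, htrans, measure_preimage_add, hsmul, Measure.addHaar_smul,
      finrank_euclideanSpace_fin]
    congr 2
    rw [abs_of_nonneg (by positivity)]
  have hvB : (volume B).toReal = Real.pi := by
    rw [hB, volume_unit_closedBall, ENNReal.toReal_ofReal Real.pi_nonneg]
  have hpt : ∀ x : EE,
      ((volume ((fun y => x + y) '' closedBall c r ∩ closedBall c r)).toReal) ^ 2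
      = (fun z : EE => (r^2 * (volume ((fun y => z + y) '' B ∩ B)).toReal)^2) (r⁻¹ • x) := by
    intro x
    simp only
    rw [h1, hcomp x, hvol, ENNReal.toReal_mul, ENNReal.toReal_ofReal (by positivity)]
  have hnum : (∫ x : EE,
      ((volume ((fun y => x + y) '' closedBall c r ∩ closedBall c r)).toReal) ^ 2)
      = r^2 * (r^4 * ∫ x : EE, ((volume ((fun y => x + y) '' B ∩ B)).toReal) ^ 2) := by
    simp_rw [hpt]
    rw [MeasureTheory.Measure.integral_comp_inv_smul volume
      (fun z : EE => (r^2 * (volume ((fun y => z + y) '' B ∩ B)).toReal)^2) r]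
    rw [finrank_euclideanSpace_fin, abs_of_nonneg (by positivity : (0:ℝ) ≤ r^2), smul_eq_mul]
    congr 1
    simp_rw [mul_pow]
    rw [MeasureTheory.integral_const_mul]
    ring
  have hden : (volume (closedBall c r)).toReal = r^2 * Real.pi := by
    rw [h1, hvol, ENNReal.toReal_mul, ENNReal.toReal_ofReal (by positivity), hvB]
  have hK : K0E2 (closedBall c r) = K0E2 B := by
    unfold K0E2
    rw [hnum, hden, hvB]
    have hpi := Real.pi_ne_zero
    field_simp
  rw [hK, K0_unit]
end

section
/- Let B = {x ∈ ℝ³ : ‖x − c‖ ≤ r} be a closed ball in ℝ³ of radius r > 0 centered at c, where ‖·‖ is the Euclidean norm. Then K₀(B) = 34/105. -/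
/-!
Up to a translation and a rotation, `(x + B) ∩ B` is the lens cut out of two balls of radius `r`
centred at `0` and at `(‖x‖, 0, 0)`. Its slices perpendicular to the axis are disks, so its
volume is `∫ π (r² - max ((t - ‖x‖)², t²))⁺ dt`, two spherical caps of height `r - ‖x‖ / 2`:
`V(‖x‖) = π/12 (2r - ‖x‖)₊² (4r + ‖x‖)`. Integrating the radial function `V(‖x‖)²` in polar
coordinates gives `4π ∫₀^{2r} y² V(y)² dy = 4π · 544 π² r⁹ / 2835`, and dividing by
`|B|³ = (4π r³ / 3)³` leaves `34/105`.
-/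

open MeasureTheory Filter Topology

/-- `K₀(R) = |R|⁻³ ∫ |(x + R) ∩ R|² dx` for subsets of Euclidean 3-space. -/
noncomputable def K0E3 (R : Set (EuclideanSpace ℝ (Fin 3))) : ℝ :=
  (∫ x : EuclideanSpace ℝ (Fin 3), ((volume ((fun y => x + y) '' R ∩ R)).toReal) ^ 2) /
    ((volume R).toReal) ^ 3

open Real Metric Set

section InnerProductSpace

variable {E : Type*} [NormedAddCommGroup E] [InnerProductSpace ℝ E] [FiniteDimensional ℝ E]
  [MeasurableSpace E] [BorelSpace E]

theorem volume_closedBall_inter_closedBall_eq_sub (a b : E) (r s : ℝ) :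
    volume (closedBall a r ∩ closedBall b s) = volume (closedBall (a - b) r ∩ closedBall 0 s) := by
  rw [← measure_preimage_add_right volume b, preimage_inter, preimage_add_right_closedBall,
    preimage_add_right_closedBall, sub_self]

theorem volume_closedBall_inter_closedBall_zero_of_norm_eq {x y : E} (h : ‖x‖ = ‖y‖) (r s : ℝ) :
    volume (closedBall x r ∩ closedBall 0 s) = volume (closedBall y r ∩ closedBall 0 s) := by
  set ρ := Submodule.reflection (ℝ ∙ (y - x))ᗮ
  have hρ : ρ.symm x = y := ρ.symm_apply_eq.2 (Submodule.reflection_sub h.symm).symm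
  rw [← ρ.measurePreserving.measure_preimage
      (measurableSet_closedBall.inter measurableSet_closedBall).nullMeasurableSet,
    preimage_inter, ρ.preimage_closedBall, ρ.preimage_closedBall, hρ, map_zero]

theorem volume_closedBall_inter_closedBall_congr {a b a' b' : E} (h : dist a b = dist a' b')
    (r s : ℝ) :
    volume (closedBall a r ∩ closedBall b s) = volume (closedBall a' r ∩ closedBall b' s) := by
  rw [volume_closedBall_inter_closedBall_eq_sub a b,
    volume_closedBall_inter_closedBall_eq_sub a' b']
  exact volume_closedBall_inter_closedBall_zero_of_norm_eq (by simpa [dist_eq_norm] using h) r s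

end InnerProductSpace

theorem volume_setOf_sq_add_sq_le (ρ : ℝ) :
    volume {u : Fin 2 → ℝ | u 0 ^ 2 + u 1 ^ 2 ≤ ρ} = ENNReal.ofReal (π * ρ) := by
  rcases lt_or_ge ρ 0 with hρ | hρ
  · have : {u : Fin 2 → ℝ | u 0 ^ 2 + u 1 ^ 2 ≤ ρ} = ∅ :=
      eq_empty_of_forall_notMem fun u (hu : _ ≤ ρ) => by
        nlinarith [sq_nonneg (u 0), sq_nonneg (u 1)]
    rw [this, measure_empty, ENNReal.ofReal_of_nonpos (by nlinarith [pi_pos])]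
  · have hdisk : (MeasurableEquiv.toLp 2 (Fin 2 → ℝ)).symm ⁻¹' {u | u 0 ^ 2 + u 1 ^ 2 ≤ ρ} =
        closedBall 0 √ρ := by
      ext u
      simp [EuclideanSpace.closedBall_zero_eq _ (sqrt_nonneg ρ), sq_sqrt hρ, Fin.sum_univ_two]
    rw [← (EuclideanSpace.volume_preserving_symm_measurableEquiv_toLp _).measure_preimage_equiv,
      hdisk, EuclideanSpace.volume_closedBall_fin_two, ← ENNReal.ofReal_pow (sqrt_nonneg ρ),
      sq_sqrt hρ, ← ENNReal.ofReal_mul hρ, mul_comm]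

theorem volume_setOf_sq_add_sq_le_of_measurable {g : ℝ → ℝ} (hg : Measurable g) :
    volume {x : EuclideanSpace ℝ (Fin 3) | x 1 ^ 2 + x 2 ^ 2 ≤ g (x 0)} =
      ∫⁻ t, ENNReal.ofReal (π * g t) := by
  set T : Set (ℝ × (Fin 2 → ℝ)) := {p | p.2 0 ^ 2 + p.2 1 ^ 2 ≤ g p.1}
  have hT : MeasurableSet T := measurableSet_le (by fun_prop) (hg.comp measurable_fst)
  have hpi : {x : EuclideanSpace ℝ (Fin 3) | x 1 ^ 2 + x 2 ^ 2 ≤ g (x 0)} =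
      (MeasurableEquiv.toLp 2 (Fin 3 → ℝ)).symm ⁻¹'
        (MeasurableEquiv.piFinSuccAbove (fun _ => ℝ) 0 ⁻¹' T) := rfl
  rw [hpi,
    (EuclideanSpace.volume_preserving_symm_measurableEquiv_toLp (Fin 3)).measure_preimage_equiv,
    (volume_preserving_piFinSuccAbove (fun _ : Fin 3 => ℝ) 0).measure_preimage_equiv,
    Measure.volume_eq_prod, Measure.prod_apply hT]
  simp_rw [← volume_setOf_sq_add_sq_le]
  rfl

theorem closedBall_single_inter_closedBall_zero {r : ℝ} (hr : 0 ≤ r) (d : ℝ) :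
    closedBall (EuclideanSpace.single 0 d) r ∩ closedBall (0 : EuclideanSpace ℝ (Fin 3)) r =
      {x | x 1 ^ 2 + x 2 ^ 2 ≤ r ^ 2 - max ((x 0 - d) ^ 2) (x 0 ^ 2)} := by
  ext x
  simp only [EuclideanSpace.closedBall_zero_eq _ hr, Fin.sum_univ_three, mem_inter_iff,
    mem_closedBall, EuclideanSpace.dist_eq, PiLp.single_apply, ↓reduceIte, one_ne_zero,
    dist_zero_right, norm_eq_abs, sq_abs, Fin.reduceEq, sqrt_le_left hr, mem_ofPred_eq]
  rw [Real.dist_eq, sq_abs, le_sub_iff_add_le', max_add, max_le_iff, add_assoc, add_assoc]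

noncomputable def lensVolume (r d : ℝ) : ℝ := π / 12 * max (2 * r - d) 0 ^ 2 * (4 * r + d)

theorem lensVolume_nonneg {r d : ℝ} (hr : 0 ≤ r) (hd : 0 ≤ d) : 0 ≤ lensVolume r d := by
  unfold lensVolume
  positivity

theorem lintegral_lens_section {r d : ℝ} (hr : 0 ≤ r) (hd : 0 ≤ d) :
    ∫⁻ t, ENNReal.ofReal (π * (r ^ 2 - max ((t - d) ^ 2) (t ^ 2))) =
      ENNReal.ofReal (lensVolume r d) := by
  rcases le_or_gt (2 * r) d with hdr | hdr
  · have h0 : ∀ t : ℝ, π * (r ^ 2 - max ((t - d) ^ 2) (t ^ 2)) ≤ 0 := by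
      intro t
      refine mul_nonpos_of_nonneg_of_nonpos pi_pos.le (sub_nonpos.2 ?_)
      rcases le_total t (d / 2) with ht | ht
      · exact le_max_of_le_left (by nlinarith)
      · exact le_max_of_le_right (by nlinarith)
    simp [ENNReal.ofReal_of_nonpos (h0 _), lensVolume, max_eq_right (by linarith : 2 * r - d ≤ 0)]
  · set f : ℝ → ℝ := fun t => π * (r ^ 2 - max ((t - d) ^ 2) (t ^ 2))
    have hf : Continuous f := by fun_prop
    have hsupp : Function.support (fun t => ENNReal.ofReal (f t)) ⊆ Ioc (d - r) r := by
      intro t ht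
      by_contra hIoc
      refine ht (ENNReal.ofReal_of_nonpos
        (mul_nonpos_of_nonneg_of_nonpos pi_pos.le (sub_nonpos.2 ?_)))
      rcases not_and_or.1 hIoc with ht | ht
      · exact le_max_of_le_left (by nlinarith)
      · exact le_max_of_le_right (by nlinarith)
    have hf_nonneg : ∀ t ∈ Ioc (d - r) r, 0 ≤ f t := by
      rintro t ⟨h1, h2⟩
      exact mul_nonneg pi_pos.le (sub_nonneg.2 (max_le (by nlinarith) (by nlinarith)))
    have hleft :
        ∫ t in (d - r)..(d / 2), f t = ∫ t in (d - r)..(d / 2), π * (r ^ 2 - (t - d) ^ 2) := by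
      refine intervalIntegral.integral_congr fun t ht => ?_
      rw [uIcc_of_le (by linarith)] at ht
      simp only [f, max_eq_left (by nlinarith [ht.2] : t ^ 2 ≤ (t - d) ^ 2)]
    have hright : ∫ t in (d / 2)..r, f t = ∫ t in (d / 2)..r, π * (r ^ 2 - t ^ 2) := by
      refine intervalIntegral.integral_congr fun t ht => ?_
      rw [uIcc_of_le (by linarith)] at ht
      simp only [f, max_eq_right (by nlinarith [ht.1] : (t - d) ^ 2 ≤ t ^ 2)]
    rw [← setLIntegral_eq_of_support_subset hsupp, ← ofReal_integral_eq_lintegral_ofReal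
        hf.integrableOn_Ioc (ae_restrict_of_forall_mem measurableSet_Ioc hf_nonneg),
      ← intervalIntegral.integral_of_le (by linarith),
      ← intervalIntegral.integral_add_adjacent_intervals (b := d / 2)
        (hf.intervalIntegrable _ _) (hf.intervalIntegrable _ _),
      hleft, hright, intervalIntegral.integral_comp_sub_right (fun s => π * (r ^ 2 - s ^ 2))]
    simp only [sub_sub_cancel_left, intervalIntegral.integral_const_mul, intervalIntegrable_const,
      intervalIntegral.intervalIntegrable_pow, intervalIntegral.integral_sub,
      intervalIntegral.integral_const, smul_eq_mul, integral_pow, lensVolume,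
      max_eq_left (by linarith : 0 ≤ 2 * r - d)]
    congr 1
    ring

theorem volume_closedBall_inter_closedBall {r : ℝ} (hr : 0 ≤ r) (a b : EuclideanSpace ℝ (Fin 3)) :
    volume (closedBall a r ∩ closedBall b r) = ENNReal.ofReal (lensVolume r (dist a b)) := by
  have hdist :
      dist a b = dist (EuclideanSpace.single 0 (dist a b)) (0 : EuclideanSpace ℝ (Fin 3)) := by
    simp
  rw [volume_closedBall_inter_closedBall_congr hdist, closedBall_single_inter_closedBall_zero hr,
    volume_setOf_sq_add_sq_le_of_measurable (g := fun t => r ^ 2 - max ((t - dist a b) ^ 2) (t ^ 2))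
      (by fun_prop), lintegral_lens_section hr dist_nonneg]

theorem integral_Ioi_sq_mul_lensVolume_sq {r : ℝ} (hr : 0 ≤ r) :
    ∫ y in Ioi 0, y ^ 2 * lensVolume r y ^ 2 = 544 * π ^ 2 / 2835 * r ^ 9 := by
  have hpoly : ∀ y ∈ uIcc 0 (2 * r), y ^ 2 * lensVolume r y ^ 2 = π ^ 2 / 144 *
      (256 * r ^ 6 * y ^ 2 - 384 * r ^ 5 * y ^ 3 + 144 * r ^ 4 * y ^ 4 + 32 * r ^ 3 * y ^ 5 -
        24 * r ^ 2 * y ^ 6 + y ^ 8) := by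
    intro y hy
    rw [uIcc_of_le (by linarith)] at hy
    rw [lensVolume, max_eq_left (by linarith [hy.2])]
    ring
  rw [setIntegral_eq_of_subset_of_forall_sdiff_eq_zero measurableSet_Ioi
      (Ioc_subset_Ioi_self : Ioc 0 (2 * r) ⊆ Ioi 0) fun y ⟨(hy : 0 < y), hy'⟩ => ?_,
    ← intervalIntegral.integral_of_le (by linarith),
    intervalIntegral.integral_congr hpoly]
  · simp (disch := exact Continuous.intervalIntegrable (by fun_prop) _ _) only
      [intervalIntegral.integral_const_mul, intervalIntegral.integral_add,
        intervalIntegral.integral_sub, integral_pow]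
    ring
  · have : 2 * r < y := by simpa [hy] using hy'
    simp [lensVolume, max_eq_right (by linarith : 2 * r - y ≤ 0)]

/-- for a closed ball in `ℝ³`, `K₀ = 34/105`. -/
theorem stmt_12 (c : EuclideanSpace ℝ (Fin 3)) (r : ℝ) (hr : 0 < r) :
    K0E3 (Metric.closedBall c r) = 34 / 105 := by
  have hlens (x : EuclideanSpace ℝ (Fin 3)) :
      (volume ((fun y => x + y) '' closedBall c r ∩ closedBall c r)).toReal = lensVolume r ‖x‖ := by
    rw [image_add_left, preimage_add_left_closedBall, neg_neg,
      volume_closedBall_inter_closedBall hr.le, dist_add_self_left,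
      ENNReal.toReal_ofReal (lensVolume_nonneg hr.le (norm_nonneg x))]
  unfold K0E3
  simp_rw [hlens]
  rw [integral_fun_norm_addHaar volume (fun s => lensVolume r s ^ 2), finrank_euclideanSpace_fin,
    measureReal_def, EuclideanSpace.volume_ball_fin_three,
    EuclideanSpace.volume_closedBall_fin_three]
  simp only [smul_eq_mul, nsmul_eq_mul, Nat.reduceSub]
  rw [integral_Ioi_sq_mul_lensVolume_sq hr.le]
  simp only [ENNReal.toReal_mul, ENNReal.toReal_pow, ENNReal.toReal_ofReal zero_le_one,
    ENNReal.toReal_ofReal hr.le, ENNReal.toReal_ofReal (by positivity : 0 ≤ π * 4 / 3)]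
  field_simp
  ring
end

section
/- Let B = {x ∈ ℝ² : ‖x‖ ≤ r} be the closed disk of radius r > 0 centered at the origin, where ‖·‖ is the Euclidean norm, and let v ∈ ℝ². Then the limit V(v) = lim_{λ→∞} (|λB| − |λB ∩ (v + λB)|)/λ exists and equals 2r‖v‖. -/
/-!
For `L > 0` the difference of areas is `|B_R \ (v + B_R)|` with `R = L r`. In orthonormal
coordinates in which `v = (0, d)`, `d = ‖v‖`, the slice of `B_R \ (v + B_R)` at first
coordinate `y` is an interval of length `min d (2 √(R² - y²))`. Fubini and the substitution
`y = L u` turn the quotient into `∫ min d (2 L √(r² - u²)) du`, and the integrand increases to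
`d` on `(-r, r)`, so dominated convergence gives the limit `2 r d`.
-/

open MeasureTheory Filter Topology Set

theorem OrthonormalBasis.exists_repr_eq_single {E ι : Type*} [NormedAddCommGroup E]
    [InnerProductSpace ℝ E] [FiniteDimensional ℝ E] [Fintype ι] [DecidableEq ι]
    (hcard : Module.finrank ℝ E = Fintype.card ι) (i : ι) (v : E) :
    ∃ b : OrthonormalBasis ι ℝ E, b.repr v = EuclideanSpace.single i ‖v‖ := by
  rcases eq_or_ne v 0 with rfl | hv
  · obtain ⟨b, -⟩ := Orthonormal.exists_orthonormalBasis_extension_of_card_eq hcard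
      (v := fun _ => (0 : E)) (s := ∅) (by simp)
    exact ⟨b, by ext; simp⟩
  · obtain ⟨b, hb⟩ := Orthonormal.exists_orthonormalBasis_extension_of_card_eq hcard
      (v := fun _ => ‖v‖⁻¹ • v) (s := {i})
      (by simpa using norm_smul_inv_norm (𝕜 := ℝ) hv)
    refine ⟨b, ?_⟩
    have hvb : v = ‖v‖ • b i := by
      rw [hb i rfl, smul_inv_smul₀ (norm_ne_zero_iff.mpr hv)]
    rw [hvb, map_smul, b.repr_self, norm_smul, norm_norm, b.norm_eq_one, mul_one]
    ext j
    simp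

theorem volume_Icc_sdiff_Icc_add (a b : ℝ) {d : ℝ} (hd : 0 ≤ d) :
    volume (Icc a b \ Icc (a + d) (b + d)) = ENNReal.ofReal (min d (b - a)) := by
  rcases le_or_gt d (b - a) with hdb | hdb
  · have : Icc a b \ Icc (a + d) (b + d) = Ico a (a + d) := by
      ext x
      simp only [Set.mem_sdiff, mem_Icc, mem_Ico]
      constructor
      · rintro ⟨⟨hax, hxb⟩, hx⟩
        exact ⟨hax, lt_of_not_ge fun h => hx ⟨h, by linarith⟩⟩
      · rintro ⟨hax, hx⟩
        exact ⟨⟨hax, by linarith⟩, fun h => by linarith [h.1]⟩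
    rw [this, Real.volume_Ico, min_eq_left hdb, add_sub_cancel_left]
  · have : Icc a b \ Icc (a + d) (b + d) = Icc a b :=
      sdiff_eq_left.mpr (disjoint_left.mpr fun x hx hx' => by linarith [hx.2, hx'.1])
    rw [this, Real.volume_Icc, min_eq_right hdb.le]

theorem setOf_sq_add_sub_sq_le_eq_Icc {R y : ℝ} (h : y ^ 2 ≤ R ^ 2) (t : ℝ) :
    {x : ℝ | y ^ 2 + (x - t) ^ 2 ≤ R ^ 2} =
      Icc (t - √(R ^ 2 - y ^ 2)) (t + √(R ^ 2 - y ^ 2)) := by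
  ext x
  rw [mem_ofPred_eq, mem_Icc, ← sub_le_iff_le_add', sub_le_comm, ← abs_sub_le_iff,
    Real.le_sqrt (abs_nonneg _) (by linarith), sq_abs]
  constructor <;> intro <;> linarith

theorem volume_disk_slice_sdiff (R d y : ℝ) (hd : 0 ≤ d) :
    volume ({x : ℝ | y ^ 2 + x ^ 2 ≤ R ^ 2} \ {x | y ^ 2 + (x - d) ^ 2 ≤ R ^ 2}) =
      ENNReal.ofReal (min d (2 * √(R ^ 2 - y ^ 2))) := by
  by_cases h : y ^ 2 ≤ R ^ 2
  · have h0 := setOf_sq_add_sub_sq_le_eq_Icc h 0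
    simp only [sub_zero, zero_sub, zero_add] at h0
    rw [h0, setOf_sq_add_sub_sq_le_eq_Icc h d, sub_eq_add_neg d, add_comm d, add_comm d,
      volume_Icc_sdiff_Icc_add _ _ hd]
    ring_nf
  · have hempty : {x : ℝ | y ^ 2 + x ^ 2 ≤ R ^ 2} = ∅ :=
      eq_empty_of_forall_notMem fun x hx => h (by nlinarith [sq_nonneg x, hx.out])
    rw [hempty, empty_sdiff, measure_empty, Real.sqrt_eq_zero'.mpr (by linarith), mul_zero,
      min_eq_right hd, ENNReal.ofReal_zero]

theorem EuclideanSpace.norm_le_iff_sq_add_sq_le {R : ℝ} (hR : 0 ≤ R)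
    (w : EuclideanSpace ℝ (Fin 2)) :
    ‖w‖ ≤ R ↔ w 0 ^ 2 + w 1 ^ 2 ≤ R ^ 2 := by
  rw [EuclideanSpace.norm_eq, Real.sqrt_le_left hR]
  simp [Fin.sum_univ_two]

theorem volume_closedBall_sdiff_closedBall {R : ℝ} (hR : 0 ≤ R)
    (v : EuclideanSpace ℝ (Fin 2)) :
    volume (Metric.closedBall 0 R \ Metric.closedBall v R) =
      ∫⁻ y, ENNReal.ofReal (min ‖v‖ (2 * √(R ^ 2 - y ^ 2))) := by
  obtain ⟨b, hb⟩ := OrthonormalBasis.exists_repr_eq_single (ι := Fin 2) (by simp) 1 v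
  set S : Set (ℝ × ℝ) :=
    {p | p.1 ^ 2 + p.2 ^ 2 ≤ R ^ 2} \ {p | p.1 ^ 2 + (p.2 - ‖v‖) ^ 2 ≤ R ^ 2}
  have hS : MeasurableSet S :=
    (measurableSet_le (by fun_prop) measurable_const).diff
      (measurableSet_le (by fun_prop) measurable_const)
  let T : EuclideanSpace ℝ (Fin 2) → ℝ × ℝ := fun x => (b.repr x 0, b.repr x 1)
  have hT : MeasurePreserving T volume volume :=
    (volume_preserving_finTwoArrow ℝ).comp
      ((EuclideanSpace.volume_preserving_symm_measurableEquiv_toLp (Fin 2)).comp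
        b.measurePreserving_repr)
  have hpre : Metric.closedBall 0 R \ Metric.closedBall v R = T ⁻¹' S := by
    ext x
    simp only [Set.mem_sdiff, Metric.mem_closedBall, dist_eq_norm, sub_zero, Set.mem_preimage,
      S, T, mem_ofPred_eq]
    rw [← b.repr.norm_map x, ← b.repr.norm_map (x - v), map_sub, hb,
      EuclideanSpace.norm_le_iff_sq_add_sq_le hR, EuclideanSpace.norm_le_iff_sq_add_sq_le hR]
    simp
  rw [hpre, hT.measure_preimage hS.nullMeasurableSet, Measure.volume_eq_prod,
    Measure.prod_apply hS]
  exact lintegral_congr fun y => volume_disk_slice_sdiff R _ y (norm_nonneg v)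

theorem measureReal_closedBall_sdiff_closedBall {R : ℝ} (hR : 0 ≤ R)
    (v : EuclideanSpace ℝ (Fin 2)) :
    volume.real (Metric.closedBall 0 R \ Metric.closedBall v R) =
      ∫ y, min ‖v‖ (2 * √(R ^ 2 - y ^ 2)) := by
  rw [integral_eq_lintegral_of_nonneg_ae
      (ae_of_all _ fun y => le_min (norm_nonneg v) (by positivity)) (by fun_prop),
    ← volume_closedBall_sdiff_closedBall hR, measureReal_def]

theorem integral_min_sqrt_div_eq {L : ℝ} (hL : 0 < L) (d r : ℝ) :
    (∫ y, min d (2 * √((L * r) ^ 2 - y ^ 2))) / L =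
      ∫ u, min d (2 * (L * √(r ^ 2 - u ^ 2))) := by
  have hscale (u : ℝ) : L * √(r ^ 2 - u ^ 2) = √((L * r) ^ 2 - (L * u) ^ 2) := by
    rw [show (L * r) ^ 2 - (L * u) ^ 2 = L ^ 2 * (r ^ 2 - u ^ 2) by ring,
      Real.sqrt_mul (sq_nonneg L), Real.sqrt_sq hL.le]
  simp_rw [hscale]
  rw [Measure.integral_comp_mul_left (fun y => min d (2 * √((L * r) ^ 2 - y ^ 2))),
    abs_of_pos (inv_pos.mpr hL), smul_eq_mul, inv_mul_eq_div]

theorem sqrt_sq_sub_sq_eq_zero {r u : ℝ} (hr : 0 ≤ r) (hu : u ∉ Ioo (-r) r) :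
    √(r ^ 2 - u ^ 2) = 0 := by
  rw [Real.sqrt_eq_zero', sub_nonpos, ← sq_abs u]
  exact pow_le_pow_left₀ hr (not_lt.mp (mt abs_lt.mp hu)) 2

theorem tendsto_integral_min_mul_sqrt {d r : ℝ} (hd : 0 ≤ d) (hr : 0 ≤ r) :
    Tendsto (fun L => ∫ u, min d (2 * (L * √(r ^ 2 - u ^ 2)))) atTop (𝓝 (2 * r * d)) := by
  have hlim : ∫ u, (Ioo (-r) r).indicator (fun _ => d) u = 2 * r * d := by
    rw [integral_indicator_const d measurableSet_Ioo, measureReal_def, Real.volume_Ioo,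
      ENNReal.toReal_ofReal (by linarith), smul_eq_mul]
    ring
  rw [← hlim]
  refine tendsto_integral_filter_of_dominated_convergence ((Icc (-r) r).indicator fun _ => d)
    (Eventually.of_forall fun L => by fun_prop) ?_
    ((integrable_indicator_iff measurableSet_Icc).mpr
      (integrableOn_const isCompact_Icc.measure_ne_top)) ?_
  · filter_upwards [eventually_ge_atTop 0] with L hL
    refine Eventually.of_forall fun u => ?_
    rw [Real.norm_of_nonneg (le_min hd (by positivity))]
    by_cases hu : u ∈ Icc (-r) r
    · rw [indicator_of_mem hu]
      exact min_le_left _ _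
    · rw [indicator_of_notMem hu,
        sqrt_sq_sub_sq_eq_zero hr fun hu' => hu (Ioo_subset_Icc_self hu'), mul_zero, mul_zero,
        min_eq_right hd]
  · refine Eventually.of_forall fun u => ?_
    by_cases hu : u ∈ Ioo (-r) r
    · have hs : 0 < √(r ^ 2 - u ^ 2) := Real.sqrt_pos.mpr (by nlinarith [hu.1, hu.2])
      rw [indicator_of_mem hu]
      have hgrow : Tendsto (fun L => 2 * (L * √(r ^ 2 - u ^ 2))) atTop atTop :=
        (tendsto_id.atTop_mul_const hs).const_mul_atTop two_pos
      exact tendsto_const_nhds.congr'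
        ((hgrow.eventually_ge_atTop d).mono fun L hL => (min_eq_left hL).symm)
    · simp only [indicator_of_notMem hu, sqrt_sq_sub_sq_eq_zero hr hu, mul_zero, min_eq_right hd]
      exact tendsto_const_nhds

/-- for the closed disk `B` of radius `r` centered at the origin in `ℝ²`
and `v ∈ ℝ²`, `(|λB| - |λB ∩ (v + λB)|)/λ → 2r‖v‖` as `λ → ∞`. -/
theorem stmt_17 (r : ℝ) (hr : 0 < r) (v : EuclideanSpace ℝ (Fin 2)) :
    Tendsto (fun L : ℝ =>
      ((volume ((fun x => L • x) '' Metric.closedBall (0 : EuclideanSpace ℝ (Fin 2)) r)).toReal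
        - (volume ((fun x => L • x) '' Metric.closedBall (0 : EuclideanSpace ℝ (Fin 2)) r ∩
            (fun x => v + x) ''
              ((fun x => L • x) '' Metric.closedBall (0 : EuclideanSpace ℝ (Fin 2)) r))).toReal)
        / L)
      atTop (𝓝 (2 * r * ‖v‖)) := by
  refine (tendsto_integral_min_mul_sqrt (norm_nonneg v) hr.le).congr' ?_
  filter_upwards [eventually_gt_atTop 0] with L hL
  have hR : 0 ≤ L * r := by positivity
  have hdilate : (fun x => L • x) '' Metric.closedBall (0 : EuclideanSpace ℝ (Fin 2)) r =
      Metric.closedBall 0 (L * r) := by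
    rw [image_smul, smul_closedBall _ _ hr.le, smul_zero, Real.norm_of_nonneg hL.le]
  have htranslate : (fun x => v + x) '' Metric.closedBall (0 : EuclideanSpace ℝ (Fin 2)) (L * r) =
      Metric.closedBall v (L * r) := by
    rw [image_add_left, preimage_add_closedBall, sub_neg_eq_add, zero_add]
  rw [hdilate, htranslate, ← measureReal_def, ← measureReal_def,
    ← measureReal_inter_add_sdiff measurableSet_closedBall measure_closedBall_lt_top.ne,
    add_sub_cancel_left, measureReal_closedBall_sdiff_closedBall hR, integral_min_sqrt_div_eq hL]
end
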